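/- arXiv:1812.05126 — 5 statements merged into one kernel-verified Lean document; each statement's English description precedes it below -/
import Mathlib

section
/- For every w ∈ S_n, applying the operator ∇ = Σ_{i=1}^{n−1} y_i ∂/∂x_i to the padded Schubert polynomial S̃_w gives ∇S̃_w = Σ i · S̃_{w s_i}, where the sum is over all indices 1 ≤ i ≤ n−1 with ℓ(w s_i) = ℓ(w) − 1 (i.e., over all weak-order covers w s_i ⋖_W w), and the coefficient of S̃_{w s_i} is the index i. -/
open Equiv Finset MvPolynomial

/-- The length (number of inversions) of a permutation `w`:
`ℓ(w) = #{(a,b) : a < b, w(a) > w(b)}`. -/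
def permLen {n : ℕ} (w : Equiv.Perm (Fin n)) : ℕ :=
  (Finset.univ.filter fun p : Fin n × Fin n => p.1 < p.2 ∧ w p.2 < w p.1).card

/-- The longest element `w₀` of the symmetric group, `w₀(a) = n + 1 - a` (one-based). -/
def longest (n : ℕ) : Equiv.Perm (Fin n) := Fin.revPerm

/-- The element `i` of `Fin n`, for `i : Fin (n-1)`. -/
def fa {n : ℕ} (i : Fin (n - 1)) : Fin n := ⟨(i : ℕ), by have := i.isLt; omega⟩

/-- The element `i + 1` of `Fin n`, for `i : Fin (n-1)`. -/
def fb {n : ℕ} (i : Fin (n - 1)) : Fin n := ⟨(i : ℕ) + 1, by have := i.isLt; omega⟩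

/-- The simple transposition `sᵢ` exchanging positions `i` and `i+1`
(zero-based; it is `s_{i+1}` in the one-based indexing of the paper). -/
def sgen {n : ℕ} (i : Fin (n - 1)) : Equiv.Perm (Fin n) := Equiv.swap (fa i) (fb i)

/-- The Lehmer code of `w`: `code(w)ᵢ = #{j > i : w(j) < w(i)}`. -/
def permCode {n : ℕ} (w : Equiv.Perm (Fin n)) (i : Fin n) : ℕ :=
  (Finset.univ.filter fun j => i < j ∧ w j < w i).card

/-- The Manhattan distance between the Lehmer codes of `u` and `v`;
for a strong Bruhat cover `w ⋖ wt` this is the code weight `c(w, wt)`. -/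
def codeDist {n : ℕ} (u v : Equiv.Perm (Fin n)) : ℕ :=
  ∑ i : Fin n, Nat.dist (permCode u i) (permCode v i)

/-- The weighted adjacency matrix of the weak order: entry `(u, v)` is the ∇-weight
(the one-based index `i`) if `v = u sᵢ` is a weak-order cover of `u`, and `0` otherwise. -/
def nablaMat (n : ℕ) : Matrix (Equiv.Perm (Fin n)) (Equiv.Perm (Fin n)) ℕ :=
  Matrix.of fun u v =>
    ∑ i : Fin (n - 1), if v = u * sgen i ∧ permLen v = permLen u + 1 then (i : ℕ) + 1 else 0

/-- `mNabla n u v` is the ∇-weighted number of saturated weak-order chains from `u` to `v`: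
the `(u, v)` entry of the `(ℓ(v) - ℓ(u))`-th power of the weighted weak-order adjacency
matrix.  (Since every cover raises length by exactly one, walks of length `ℓ(v) - ℓ(u)`
from `u` to `v` are exactly the saturated chains.) -/
def mNabla (n : ℕ) (u v : Equiv.Perm (Fin n)) : ℕ :=
  (nablaMat n ^ (permLen v - permLen u)) u v

/-- The weighted adjacency matrix of the strong Bruhat order with the code weights:
entry `(u, v)` is `c(u, v)` if `v = u t` is a strong cover of `u` (`t` a transposition),
and `0` otherwise. -/
def deltaMat (n : ℕ) : Matrix (Equiv.Perm (Fin n)) (Equiv.Perm (Fin n)) ℕ :=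
  Matrix.of fun u v =>
    if (∃ p : Fin n × Fin n, p.1 < p.2 ∧ v = u * Equiv.swap p.1 p.2) ∧
        permLen v = permLen u + 1
    then codeDist u v else 0

/-- `mDelta n u v` is the code-weighted number of saturated strong-order chains
from `u` to `v`. -/
def mDelta (n : ℕ) (u v : Equiv.Perm (Fin n)) : ℕ :=
  (deltaMat n ^ (permLen v - permLen u)) u v

/-- The weighted adjacency matrix of the strong Bruhat order with the Chevalley weights:
entry `(u, v)` is `j - i` if `v = u t_{ij}` (`i < j`) is a strong cover of `u`,
and `0` otherwise. -/
def chevMat (n : ℕ) : Matrix (Equiv.Perm (Fin n)) (Equiv.Perm (Fin n)) ℕ :=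
  Matrix.of fun u v =>
    ∑ p : Fin n × Fin n,
      if p.1 < p.2 ∧ v = u * Equiv.swap p.1 p.2 ∧ permLen v = permLen u + 1
      then (p.2 : ℕ) - (p.1 : ℕ) else 0

/-- `mChev n u v` is the Chevalley-weighted number of saturated strong-order chains
from `u` to `v`. -/
def mChev (n : ℕ) (u v : Equiv.Perm (Fin n)) : ℕ :=
  (chevMat n ^ (permLen v - permLen u)) u v

/-- `SchubertSpec n S` says that `S` is the family of Schubert polynomials
`𝔖_w` for `w ∈ S_n` (viewed inside `ℤ[x_1, …, x_n]`, zero-based variables):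
`𝔖_{w₀} = x_1^{n-1} x_2^{n-2} ⋯ x_{n-1}`, and whenever `ℓ(sᵢ w) = ℓ(w) - 1` we have
`𝔖_{sᵢ w} = Nᵢ 𝔖_w`, the Newton divided difference, stated multiplicatively as
`(xᵢ - xᵢ₊₁) ⬝ 𝔖_{sᵢ w} = 𝔖_w - sᵢ ⬝ 𝔖_w`. -/
def SchubertSpec (n : ℕ) (S : Equiv.Perm (Fin n) → MvPolynomial (Fin n) ℤ) : Prop :=
  S (longest n) = ∏ i : Fin n, X i ^ (n - 1 - (i : ℕ)) ∧
  ∀ (w : Equiv.Perm (Fin n)) (i : Fin (n - 1)),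
    permLen (sgen i * w) + 1 = permLen w →
    (X (fa i) - X (fb i)) * S (sgen i * w) = S w - rename (⇑(sgen i)) (S w)

/-- The exponent vector of the padded monomial `x^α y^(ρ - α)`, where
`ρ = (n-1, n-2, …, 1, 0)` (zero-based): the `x`-variables are `Sum.inl`,
the `y`-variables are `Sum.inr`. -/
noncomputable def padExp (n : ℕ) (α : Fin n →₀ ℕ) : (Fin n ⊕ Fin n) →₀ ℕ :=
  Finsupp.equivFunOnFinite.symm
    (Sum.elim (fun i => α i) (fun i => n - 1 - (i : ℕ) - α i))

/-- The padding map, the linear isomorphism sending `x^α ↦ x^α y^(ρ - α)`;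
the padded Schubert polynomial `S̃_w` is `pad n 𝔖_w`. -/
noncomputable def pad (n : ℕ) (p : MvPolynomial (Fin n) ℤ) :
    MvPolynomial (Fin n ⊕ Fin n) ℤ :=
  ∑ α ∈ p.support, monomial (padExp n α) (coeff α p)

/-- The operator `∇ = Σᵢ yᵢ ∂/∂xᵢ`. -/
noncomputable def nablaOp (n : ℕ) (p : MvPolynomial (Fin n ⊕ Fin n) ℤ) :
    MvPolynomial (Fin n ⊕ Fin n) ℤ :=
  ∑ i : Fin n, X (Sum.inr i) * pderiv (Sum.inl i) p

/-- The operator `Δ = Σᵢ xᵢ ∂/∂yᵢ`. -/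
noncomputable def deltaOp (n : ℕ) (p : MvPolynomial (Fin n ⊕ Fin n) ℤ) :
    MvPolynomial (Fin n ⊕ Fin n) ℤ :=
  ∑ i : Fin n, X (Sum.inl i) * pderiv (Sum.inr i) p


/-!
On a padded monomial, `yᵢ ∂/∂xᵢ` moves one unit of exponent from `xᵢ` to `yᵢ`, so
`∇ ∘ pad = pad ∘ D` with `D = Σᵢ ∂/∂xᵢ` on polynomials whose exponents stay below the staircase
`ρ`; Schubert polynomials do, because `(xᵢ - xᵢ₊₁) Q = P - sᵢ P` forces the `xᵢ₊₁`-degree of `Q`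
to be one less than the bound `ρᵢ` available to `P`. It therefore suffices to show
`D 𝔖_w = Σ_{w sᵢ ⋖ w} i 𝔖_{w sᵢ}`. For `w₀` this is a direct computation:
`D x^ρ = Σ_k ρ_k x^{ρ - e_k}` and `𝔖_{w₀ sⱼ} = x^{ρ - e_{n-j}}`. Since `D` is a derivation that
kills `xᵢ - xᵢ₊₁` and commutes with `sᵢ`, it commutes with the divided differences, and the
identity descends from `sᵢ w` to `w` along the weak order: applying `Nᵢ` to the sum for `sᵢ w`
kills exactly the terms `𝔖_u` with `sᵢ u > u` and sends the others to the terms of the sum for `w`.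
-/

section Length

variable {n : ℕ}

@[simp] lemma val_fa (i : Fin (n - 1)) : (fa i : ℕ) = i := rfl

@[simp] lemma val_fb (i : Fin (n - 1)) : (fb i : ℕ) = i + 1 := rfl

lemma fa_lt_fb (i : Fin (n - 1)) : fa i < fb i := by
  simp [fa, fb, Fin.lt_def]

@[simp] lemma sgen_apply_fa (i : Fin (n - 1)) : sgen i (fa i) = fb i := swap_apply_left _ _

@[simp] lemma sgen_apply_fb (i : Fin (n - 1)) : sgen i (fb i) = fa i := swap_apply_right _ _

@[simp] lemma sgen_apply_sgen (i : Fin (n - 1)) (k : Fin n) : sgen i (sgen i k) = k :=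
  swap_apply_self _ _ _

@[simp] lemma sgen_inv (i : Fin (n - 1)) : (sgen i)⁻¹ = sgen i := swap_inv _ _

@[simp] lemma sgen_mul_sgen_mul (i : Fin (n - 1)) (u : Perm (Fin n)) :
    sgen i * (sgen i * u) = u :=
  swap_mul_self_mul _ _ _

def inversions (u : Perm (Fin n)) : Finset (Fin n × Fin n) :=
  univ.filter fun p => p.1 < p.2 ∧ u p.2 < u p.1

lemma sgen_lt_sgen_iff (i : Fin (n - 1)) (p q : Fin n) :
    sgen i p < sgen i q ∧ (sgen i p, sgen i q) ≠ (fa i, fb i) ↔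
      p < q ∧ (p, q) ≠ (fa i, fb i) := by
  have := p.isLt; have := q.isLt; have := i.isLt
  simp only [sgen, swap_apply_def]
  split_ifs <;> simp [Fin.ext_iff, ← Fin.val_fin_lt] at * <;> omega

lemma card_inversions_mul_sgen_erase (u : Perm (Fin n)) (i : Fin (n - 1)) :
    ((inversions (u * sgen i)).erase (fa i, fb i)).card
      = ((inversions u).erase (fa i, fb i)).card := by
  refine card_equiv ((sgen i).prodCongr (sgen i)) fun x => ?_
  obtain ⟨p, q⟩ := x
  have := sgen_lt_sgen_iff i p q
  simp only [inversions, mem_erase, mem_filter_univ]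
  simp only [prodCongr_apply, Prod.map, Perm.mul_apply]
  tauto

lemma permLen_eq_card_erase_add (u : Perm (Fin n)) (i : Fin (n - 1)) :
    permLen u = ((inversions u).erase (fa i, fb i)).card
      + if u (fb i) < u (fa i) then 1 else 0 := by
  have hmem : (fa i, fb i) ∈ inversions u ↔ u (fb i) < u (fa i) := by
    simp [inversions, fa_lt_fb]
  split_ifs with h
  · exact (card_erase_add_one (hmem.2 h)).symm
  · rw [erase_eq_of_notMem (mt hmem.1 h)]
    rfl

lemma permLen_mul_sgen_of_lt {u : Perm (Fin n)} {i : Fin (n - 1)} (h : u (fa i) < u (fb i)) :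
    permLen (u * sgen i) = permLen u + 1 := by
  rw [permLen_eq_card_erase_add (u * sgen i) i, permLen_eq_card_erase_add u i,
    card_inversions_mul_sgen_erase]
  simp [h, h.not_gt]

lemma permLen_mul_sgen_of_gt {u : Perm (Fin n)} {i : Fin (n - 1)} (h : u (fb i) < u (fa i)) :
    permLen u = permLen (u * sgen i) + 1 := by
  rw [permLen_eq_card_erase_add (u * sgen i) i, permLen_eq_card_erase_add u i,
    card_inversions_mul_sgen_erase]
  simp [h, h.not_gt]

lemma permLen_mul_sgen_eq_or (u : Perm (Fin n)) (i : Fin (n - 1)) :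
    permLen (u * sgen i) = permLen u + 1 ∨ permLen u = permLen (u * sgen i) + 1 :=
  (lt_or_gt_of_ne (u.injective.ne (fa_lt_fb i).ne)).imp
    permLen_mul_sgen_of_lt permLen_mul_sgen_of_gt

lemma permLen_inv (u : Perm (Fin n)) : permLen u⁻¹ = permLen u := by
  refine card_equiv ((prodComm _ _).trans (u⁻¹.prodCongr u⁻¹)) fun p => ?_
  simp only [mem_filter_univ, trans_apply, prodComm_apply, prodCongr_apply, Prod.map,
    Prod.fst_swap, Prod.snd_swap, Perm.coe_inv, apply_symm_apply]
  exact and_comm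

lemma permLen_sgen_mul (u : Perm (Fin n)) (i : Fin (n - 1)) :
    permLen (sgen i * u) = permLen (u⁻¹ * sgen i) := by
  rw [← permLen_inv, mul_inv_rev, sgen_inv]

lemma permLen_sgen_mul_eq_or (u : Perm (Fin n)) (i : Fin (n - 1)) :
    permLen (sgen i * u) = permLen u + 1 ∨ permLen u = permLen (sgen i * u) + 1 := by
  rw [permLen_sgen_mul, ← permLen_inv u]
  exact permLen_mul_sgen_eq_or u⁻¹ i

lemma permLen_le (u : Perm (Fin n)) : permLen u ≤ n * n :=
  (card_filter_le _ _).trans (by simp)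

lemma exists_ascent_of_ne_longest {w : Perm (Fin n)} (hw : w ≠ longest n) :
    ∃ i : Fin (n - 1), permLen (sgen i * w) = permLen w + 1 := by
  by_contra! hasc
  apply hw
  obtain _ | m := n
  · exact Subsingleton.elim _ _
  have hanti : StrictAnti (⇑w⁻¹) := by
    refine Fin.strictAnti_iff_succ_lt.2 fun k => ?_
    have hdesc := hasc ⟨k, by omega⟩
    rw [permLen_sgen_mul, ← permLen_inv w] at hdesc
    exact (lt_or_gt_of_ne (w⁻¹.injective.ne (fa_lt_fb (n := m + 1) ⟨k, by omega⟩).ne)).resolve_left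
      (fun h => hdesc (permLen_mul_sgen_of_lt h))
  have hid : ⇑w⁻¹ ∘ Fin.rev = id :=
    ((hanti.comp Fin.rev_strictAnti).range_inj strictMono_id).1
      (by simp [Set.range_comp, EquivLike.range_eq_univ, Fin.rev_surjective.range_eq])
  exact Equiv.ext fun k => (Perm.inv_eq_iff_eq.1 (congrFun hid k)).symm

theorem longest_induction {P : Perm (Fin n) → Prop} (base : P (longest n))
    (ascent : ∀ w i, permLen (sgen i * w) = permLen w + 1 → P (sgen i * w) → P w)
    (w : Perm (Fin n)) : P w := by
  by_cases hw : w = longest n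
  · exact hw ▸ base
  · obtain ⟨i, hi⟩ := exists_ascent_of_ne_longest hw
    exact ascent w i hi (longest_induction base ascent (sgen i * w))
termination_by n * n - permLen w
decreasing_by have := permLen_le (sgen i * w); omega

lemma longest_mul_sgen (j : Fin (n - 1)) :
    longest n * sgen j = sgen (Fin.rev j) * longest n := by
  refine Equiv.ext fun k => ?_
  have := j.isLt
  simp only [Perm.mul_apply, longest, sgen, Fin.revPerm_apply, swap_apply_def]
  split_ifs <;> simp [Fin.ext_iff] at * <;> omega

lemma permLen_longest_mul_sgen (j : Fin (n - 1)) :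
    permLen (longest n * sgen j) + 1 = permLen (longest n) :=
  (permLen_mul_sgen_of_gt (Fin.rev_lt_rev.2 (fa_lt_fb j))).symm

end Length

section DescentSum

variable {n : ℕ} {M N : Type*} [AddCommMonoid M] [AddCommMonoid N]

def descentSum (f : Perm (Fin n) → M) (w : Perm (Fin n)) : M :=
  ∑ i : Fin (n - 1),
    if permLen (w * sgen i) + 1 = permLen w then ((i : ℕ) + 1) • f (w * sgen i) else 0

lemma map_descentSum {F : Type*} [FunLike F M N] [AddMonoidHomClass F M N] (g : F)
    (f : Perm (Fin n) → M) (w : Perm (Fin n)) :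
    g (descentSum f w) = descentSum (fun u => g (f u)) w := by
  simp only [descentSum, map_sum, apply_ite g, map_nsmul, map_zero]

lemma descentSum_sub {G : Type*} [AddCommGroup G] (f g : Perm (Fin n) → G) (w : Perm (Fin n)) :
    descentSum f w - descentSum g w = descentSum (fun u => f u - g u) w := by
  simp only [descentSum, ← sum_sub_distrib, smul_sub]
  refine sum_congr rfl fun i _ => ?_
  split_ifs <;> simp

lemma descentSum_longest (f : Perm (Fin n) → M) :
    descentSum f (longest n) = ∑ i : Fin (n - 1), ((i : ℕ) + 1) • f (longest n * sgen i) :=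
  sum_congr rfl fun i _ => if_pos (permLen_longest_mul_sgen i)

/-- Along an ascent `w < sᵢ w`, the descents `j` of `sᵢ w` with `sᵢ w sⱼ > w sⱼ` are exactly
the descents of `w`. -/
lemma descentSum_sgen_mul {w : Perm (Fin n)} {i : Fin (n - 1)}
    (hi : permLen (sgen i * w) = permLen w + 1) (f : Perm (Fin n) → M) :
    descentSum (fun u => if permLen (sgen i * u) + 1 = permLen u then f (sgen i * u) else 0)
      (sgen i * w) = descentSum f w := by
  refine sum_congr rfl fun j _ => ?_
  have hassoc : sgen i * (sgen i * w * sgen j) = w * sgen j := by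
    rw [mul_assoc, sgen_mul_sgen_mul]
  have h₁ := permLen_mul_sgen_eq_or w j
  have h₂ := permLen_mul_sgen_eq_or (sgen i * w) j
  have h₃ := permLen_sgen_mul_eq_or (w * sgen j) i
  dsimp only
  rw [hassoc]
  rw [← mul_assoc] at h₃
  split_ifs <;> first | rfl | omega | simp

end DescentSum

section TotalDerivative

variable {σ R : Type*} [Fintype σ] [CommSemiring R]

noncomputable def totalPderiv : Derivation R (MvPolynomial σ R) (MvPolynomial σ R) :=
  ∑ i, pderiv i

lemma totalPderiv_apply (p : MvPolynomial σ R) : totalPderiv p = ∑ i, pderiv i p := by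
  rw [totalPderiv, ← Derivation.coeFnAddMonoidHom_apply, map_sum, Finset.sum_apply]
  rfl

@[simp] lemma totalPderiv_X (i : σ) : totalPderiv (X i : MvPolynomial σ R) = 1 := by
  classical
  rw [totalPderiv_apply, sum_eq_single i (fun j _ hj => pderiv_X_of_ne hj.symm) (by simp)]
  exact pderiv_X_self i

lemma totalPderiv_rename (e : σ ≃ σ) (p : MvPolynomial σ R) :
    totalPderiv (rename e p) = rename e (totalPderiv p) := by
  simp only [totalPderiv_apply, map_sum, ← pderiv_rename e.injective]
  exact (e.sum_comp fun i => pderiv i (rename e p)).symm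

lemma totalPderiv_monomial (s : σ →₀ ℕ) (a : R) :
    totalPderiv (monomial s a) = ∑ i, monomial (s - Finsupp.single i 1) (a * s i) := by
  simp only [totalPderiv_apply, pderiv_monomial]

end TotalDerivative

section Degree

variable {σ R : Type*} [CommRing R] [Nontrivial R]

lemma one_le_degreeOf_X_sub_X {a b : σ} (hab : a ≠ b) :
    1 ≤ degreeOf b (X a - X b : MvPolynomial σ R) := by
  classical
  refine le_of_eq_of_le (Finsupp.single_eq_same (a := b)).symm (monomial_le_degreeOf b ?_)
  simp [coeff_X, Finsupp.single_left_inj one_ne_zero, hab]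

lemma X_sub_X_ne_zero {a b : σ} (hab : a ≠ b) : (X a - X b : MvPolynomial σ R) ≠ 0 :=
  sub_ne_zero.2 (X_injective.ne hab)

end Degree

section Schubert

variable {n : ℕ} {S : Perm (Fin n) → MvPolynomial (Fin n) ℤ}

noncomputable def staircase (n : ℕ) : Fin n →₀ ℕ :=
  Finsupp.equivFunOnFinite.symm fun k => n - 1 - k

@[simp] lemma staircase_apply (k : Fin n) : staircase n k = n - 1 - k := by
  simp [staircase]

lemma rename_sgen_rename_sgen (i : Fin (n - 1)) (p : MvPolynomial (Fin n) ℤ) :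
    rename (sgen i) (rename (sgen i) p) = p := by
  rw [rename_rename, show ⇑(sgen i) ∘ ⇑(sgen i) = id from funext (sgen_apply_sgen i),
    rename_id_apply]

lemma degreeOf_le_of_X_sub_X_mul_eq {P Q : MvPolynomial (Fin n) ℤ} {i : Fin (n - 1)}
    (hP : ∀ k : Fin n, degreeOf k P ≤ n - 1 - k)
    (h : (X (fa i) - X (fb i)) * Q = P - rename (sgen i) P) (k : Fin n) :
    degreeOf k Q ≤ n - 1 - k := by
  rcases eq_or_ne Q 0 with rfl | hQ
  · simp
  have hdeg : degreeOf k (X (fa i) - X (fb i) : MvPolynomial (Fin n) ℤ) + degreeOf k Q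
      ≤ max (n - 1 - k) (n - 1 - sgen i k) := by
    rw [← degreeOf_mul_eq (X_sub_X_ne_zero (fa_lt_fb i).ne) hQ, h]
    refine (degreeOf_sub_le k _ _).trans (max_le_max (hP k) ?_)
    have hren := degreeOf_rename_of_injective (p := P) (sgen i).injective (sgen i k)
    rw [sgen_apply_sgen] at hren
    exact hren ▸ hP _
  by_cases hb : k = fb i
  · subst hb
    have := one_le_degreeOf_X_sub_X (R := ℤ) (fa_lt_fb i).ne
    simp only [sgen_apply_fb, val_fa, val_fb] at hdeg ⊢
    omega
  by_cases ha : k = fa i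
  · subst ha
    simp only [sgen_apply_fa, val_fa, val_fb] at hdeg ⊢
    omega
  · rw [sgen, swap_apply_of_ne_of_ne ha hb] at hdeg
    omega

namespace SchubertSpec

lemma longest_eq (hS : SchubertSpec n S) : S (longest n) = monomial (staircase n) 1 := by
  rw [hS.1, monomial_eq, C_1, one_mul, Finsupp.prod_fintype _ _ (fun _ => pow_zero _)]
  simp

lemma X_sub_X_mul_eq_of_ascent (hS : SchubertSpec n S) {w : Perm (Fin n)} {i : Fin (n - 1)}
    (hi : permLen (sgen i * w) = permLen w + 1) :
    (X (fa i) - X (fb i)) * S w = S (sgen i * w) - rename (sgen i) (S (sgen i * w)) := by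
  simpa using hS.2 (sgen i * w) i (by rw [sgen_mul_sgen_mul, hi])

lemma rename_sgen_eq_of_ascent (hS : SchubertSpec n S) {u : Perm (Fin n)} {i : Fin (n - 1)}
    (hi : permLen (sgen i * u) = permLen u + 1) :
    rename (sgen i) (S u) = S u := by
  have key := hS.X_sub_X_mul_eq_of_ascent hi
  have key' := congrArg (rename (sgen i)) key
  rw [map_mul, map_sub, map_sub, rename_X, rename_X, sgen_apply_fa, sgen_apply_fb,
    rename_sgen_rename_sgen] at key'
  refine mul_left_cancel₀ (X_sub_X_ne_zero (fa_lt_fb i).ne) ?_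
  linear_combination -key' - key

lemma sub_rename_sgen (hS : SchubertSpec n S) (u : Perm (Fin n)) (i : Fin (n - 1)) :
    S u - rename (sgen i) (S u) = (X (fa i) - X (fb i)) *
      if permLen (sgen i * u) + 1 = permLen u then S (sgen i * u) else 0 := by
  split_ifs with h
  · exact (hS.2 u i h).symm
  · rw [mul_zero, sub_eq_zero,
      hS.rename_sgen_eq_of_ascent ((permLen_sgen_mul_eq_or u i).resolve_right (by omega))]

lemma longest_mul_sgen_eq (hS : SchubertSpec n S) (j : Fin (n - 1)) :
    S (longest n * sgen j) = monomial (staircase n - Finsupp.single (fa j.rev) 1) 1 := by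
  set i := j.rev
  have hi := j.rev.isLt
  have key := hS.2 (longest n) i (by rw [← longest_mul_sgen]; exact permLen_longest_mul_sgen j)
  rw [← longest_mul_sgen, hS.longest_eq, rename_monomial] at key
  have ha : Finsupp.single (fa i) 1 + (staircase n - Finsupp.single (fa i) 1) = staircase n :=
    add_tsub_cancel_of_le (Finsupp.single_le_iff.2 (by simp; omega))
  have hb : Finsupp.single (fb i) 1 + (staircase n - Finsupp.single (fa i) 1)
      = Finsupp.mapDomain (sgen i) (staircase n) := by
    ext k
    rw [Finsupp.mapDomain_equiv_apply, ← Perm.inv_def, sgen_inv]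
    simp only [Finsupp.add_apply, Finsupp.tsub_apply, Finsupp.single_apply, staircase_apply,
      sgen, swap_apply_def]
    split_ifs <;> simp [Fin.ext_iff] at * <;> omega
  refine mul_left_cancel₀ (X_sub_X_ne_zero (fa_lt_fb i).ne) (key.trans ?_)
  rw [sub_mul, ← pow_one (X (fa i)), ← pow_one (X (fb i)), ← monomial_single_add,
    ← monomial_single_add, ha, hb]

lemma degreeOf_le (hS : SchubertSpec n S) (w : Perm (Fin n)) (k : Fin n) :
    degreeOf k (S w) ≤ n - 1 - k := by
  refine longest_induction (P := fun w => ∀ k : Fin n, degreeOf k (S w) ≤ n - 1 - k)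
    (fun k => ?_) (fun w i hi ih => ?_) w k
  · rw [hS.longest_eq, degreeOf_monomial_eq _ _ one_ne_zero, staircase_apply]
  · exact degreeOf_le_of_X_sub_X_mul_eq ih (hS.X_sub_X_mul_eq_of_ascent hi)

lemma totalPderiv_longest (hS : SchubertSpec n S) :
    totalPderiv (S (longest n)) = descentSum S (longest n) := by
  rw [descentSum_longest, hS.longest_eq, totalPderiv_monomial]
  refine (Fintype.sum_of_injective (fun j => fa j.rev) (fun j j' h => ?_) _ _ ?_ ?_).symm
  · have := j.isLt; have := j'.isLt
    simp [Fin.ext_iff] at h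
    exact Fin.ext (by omega)
  · intro k hk
    have : (k : ℕ) = n - 1 := by
      by_contra hne
      exact hk ⟨Fin.rev ⟨k, by omega⟩, by simp [Fin.ext_iff]⟩
    simp [this]
  · intro j
    have := j.isLt
    rw [hS.longest_mul_sgen_eq, smul_monomial, nsmul_one]
    congr 1
    simp

lemma totalPderiv_eq (hS : SchubertSpec n S) (w : Perm (Fin n)) :
    totalPderiv (S w) = descentSum S w := by
  refine longest_induction (P := fun w => totalPderiv (S w) = descentSum S w)
    hS.totalPderiv_longest (fun w i hi ih => ?_) w
  refine mul_left_cancel₀ (X_sub_X_ne_zero (R := ℤ) (fa_lt_fb i).ne) ?_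
  calc (X (fa i) - X (fb i)) * totalPderiv (S w)
      = totalPderiv ((X (fa i) - X (fb i)) * S w) := by
        simp [Derivation.leibniz]
    _ = totalPderiv (S (sgen i * w)) - rename (sgen i) (totalPderiv (S (sgen i * w))) := by
        rw [hS.X_sub_X_mul_eq_of_ascent hi, map_sub, totalPderiv_rename]
    _ = descentSum (fun u => (X (fa i) - X (fb i)) *
          if permLen (sgen i * u) + 1 = permLen u then S (sgen i * u) else 0) (sgen i * w) := by
        simp only [ih, map_descentSum, descentSum_sub, hS.sub_rename_sgen]
    _ = (X (fa i) - X (fb i)) * descentSum S w := by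
        rw [← descentSum_sgen_mul hi]
        exact (map_descentSum (AddMonoidHom.mulLeft (X (fa i) - X (fb i))) _ _).symm

end SchubertSpec

end Schubert

section Padding

variable {n : ℕ}

lemma pad_add (p q : MvPolynomial (Fin n) ℤ) : pad n (p + q) = pad n p + pad n q := by
  simp only [pad, ← MvPolynomial.sum_def, AddMonoidAlgebra.coeff_add]
  exact Finsupp.sum_add_index' (fun _ => monomial_zero) (fun _ => map_add _)

noncomputable def padHom (n : ℕ) : MvPolynomial (Fin n) ℤ →+ MvPolynomial (Fin n ⊕ Fin n) ℤ :=
  AddMonoidHom.mk' (pad n) pad_add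

lemma pad_sum {ι : Type*} (s : Finset ι) (f : ι → MvPolynomial (Fin n) ℤ) :
    pad n (∑ a ∈ s, f a) = ∑ a ∈ s, pad n (f a) :=
  map_sum (padHom n) f s

lemma pad_monomial (α : Fin n →₀ ℕ) (c : ℤ) :
    pad n (monomial α c) = monomial (padExp n α) c := by
  rcases eq_or_ne c 0 with rfl | hc
  · simp [pad]
  · simp [pad, support_monomial, hc]

lemma nablaOp_sum {ι : Type*} (s : Finset ι) (f : ι → MvPolynomial (Fin n ⊕ Fin n) ℤ) :
    nablaOp n (∑ a ∈ s, f a) = ∑ a ∈ s, nablaOp n (f a) := by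
  simp only [nablaOp, map_sum, mul_sum]
  exact sum_comm

lemma nablaOp_pad_monomial {α : Fin n →₀ ℕ} (hα : ∀ k : Fin n, α k ≤ n - 1 - k) (c : ℤ) :
    nablaOp n (pad n (monomial α c)) = pad n (totalPderiv (monomial α c)) := by
  rw [pad_monomial, totalPderiv_monomial, pad_sum]
  refine sum_congr rfl fun i _ => ?_
  rcases Nat.eq_zero_or_pos (α i) with h0 | hpos
  · simp [h0, pad, padExp]
  have hexp : Finsupp.single (Sum.inr i) 1 + (padExp n α - Finsupp.single (Sum.inl i) 1)
      = padExp n (α - Finsupp.single i 1) := by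
    have := hα i
    ext (j | j) <;> rcases eq_or_ne i j with rfl | hij <;> simp [padExp, Finsupp.single_apply, *]
    omega
  rw [pderiv_monomial, ← pow_one (X _), ← monomial_single_add, hexp]
  exact (pad_monomial _ _).symm

lemma nablaOp_pad {p : MvPolynomial (Fin n) ℤ} (hp : ∀ k : Fin n, degreeOf k p ≤ n - 1 - k) :
    nablaOp n (pad n p) = pad n (totalPderiv p) := by
  conv_lhs => rw [as_sum p]
  conv_rhs => rw [as_sum p]
  rw [pad_sum, map_sum, pad_sum, nablaOp_sum]
  exact sum_congr rfl fun α hα =>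
    nablaOp_pad_monomial (fun k => (monomial_le_degreeOf k hα).trans (hp k)) _

end Padding

theorem nabla_padded_schubert_general (n : ℕ)
    (S : Equiv.Perm (Fin n) → MvPolynomial (Fin n) ℤ) (hS : SchubertSpec n S)
    (w : Equiv.Perm (Fin n)) :
    nablaOp n (pad n (S w)) =
      ∑ i : Fin (n - 1),
        if permLen (w * sgen i) + 1 = permLen w
        then ((i : ℕ) + 1) • pad n (S (w * sgen i))
        else 0 := by
  rw [nablaOp_pad (hS.degreeOf_le w), hS.totalPderiv_eq]
  exact map_descentSum (padHom n) S w

/-- For every `w ∈ S_n`, `∇ S̃_w = Σ i ⬝ S̃_{w sᵢ}`, the sum being over all `i` with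
`ℓ(w sᵢ) = ℓ(w) - 1` (weak-order covers `w sᵢ ⋖_W w`), weighted by the one-based
index `i` (here `(i : ℕ) + 1` since `i : Fin (n-1)` is zero-based). -/
theorem nabla_padded_schubert (n : ℕ) (hn : 2 ≤ n)
    (S : Equiv.Perm (Fin n) → MvPolynomial (Fin n) ℤ) (hS : SchubertSpec n S)
    (w : Equiv.Perm (Fin n)) :
    nablaOp n (pad n (S w)) =
      ∑ i : Fin (n - 1),
        if permLen (w * sgen i) + 1 = permLen w
        then ((i : ℕ) + 1) • pad n (S (w * sgen i))
        else 0 :=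
  nabla_padded_schubert_general n S hS w
end

section
/- Let w ∈ S_n and 1 ≤ i < j ≤ n be such that w ⋖_S w t_{ij} is a covering relation of the strong Bruhat order (i.e., ℓ(w t_{ij}) = ℓ(w) + 1). Then the Lehmer codes code(w) and code(w t_{ij}) agree in every position other than i and j, and the Manhattan distance c(w, w t_{ij}) = Σ_k |code(w)_k − code(w t_{ij})_k| is an odd positive integer. -/
open Equiv Finset MvPolynomial

section CodeWeightAux

variable {n : ℕ}

private lemma permCode_eq_sum (u : Equiv.Perm (Fin n)) (k : Fin n) :
    permCode u k = ∑ x : Fin n, if k < x ∧ u x < u k then 1 else 0 := by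
  rw [permCode, Finset.card_filter]

private lemma permLen_eq_sum (u : Equiv.Perm (Fin n)) :
    permLen u = ∑ k : Fin n, permCode u k := by
  rw [permLen, Finset.card_filter, Fintype.sum_prod_type]
  exact Finset.sum_congr rfl fun k _ => (permCode_eq_sum u k).symm

private lemma ite_le_ite {P Q : Prop} [Decidable P] [Decidable Q] (h : P → Q) :
    (if P then 1 else 0 : ℕ) ≤ if Q then 1 else 0 := by
  split_ifs with h1 h2 <;> simp_all

private lemma swap_sum (j : Fin n) (f g : Fin n → ℕ) (h : ∀ x, x ≠ j → f x = g x) :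
    (∑ x : Fin n, f x) + g j = (∑ x : Fin n, g x) + f j := by
  have hs : ∑ x ∈ Finset.univ.erase j, f x = ∑ x ∈ Finset.univ.erase j, g x :=
    Finset.sum_congr rfl fun x hx => h x (Finset.mem_erase.mp hx).1
  rw [← Finset.add_sum_erase _ f (Finset.mem_univ j),
      ← Finset.add_sum_erase _ g (Finset.mem_univ j), hs]
  omega

private lemma sum_split {M : Type*} [AddCommMonoid M] (f : Fin n → M) {i j : Fin n}
    (hij : i ≠ j) :
    ∑ k : Fin n, f k = f i + f j + ∑ k ∈ (Finset.univ.erase i).erase j, f k := by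
  rw [← Finset.add_sum_erase _ f (Finset.mem_univ i),
      ← Finset.add_sum_erase _ f (Finset.mem_erase.mpr ⟨hij.symm, Finset.mem_univ j⟩),
      add_assoc]

private lemma code_out (u : Equiv.Perm (Fin n)) {i j k : Fin n} (hij : i < j)
    (hk : k < i ∨ j < k) :
    permCode (u * Equiv.swap i j) k = permCode u k := by
  have hki : k ≠ i := by rcases hk with h | h; exacts [h.ne, (hij.trans h).ne']
  have hkj : k ≠ j := by rcases hk with h | h; exacts [(h.trans hij).ne, h.ne']
  rw [permCode_eq_sum, permCode_eq_sum]
  rw [← Equiv.sum_comp (Equiv.swap i j)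
      (fun x => if k < x ∧ (u * Equiv.swap i j) x < (u * Equiv.swap i j) k then (1 : ℕ) else 0)]
  refine Finset.sum_congr rfl fun x _ => ?_
  simp only [Equiv.Perm.mul_apply, Equiv.swap_apply_self,
    Equiv.swap_apply_of_ne_of_ne hki hkj]
  have hx : (k < Equiv.swap i j x) ↔ (k < x) := by
    have hk' : k.val < i.val ∨ j.val < k.val := by
      rcases hk with h | h
      exacts [Or.inl h, Or.inr h]
    have hij' : i.val < j.val := hij
    by_cases hxi : x = i
    · subst hxi
      rw [Equiv.swap_apply_left]
      simp only [Fin.lt_def]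
      omega
    by_cases hxj : x = j
    · subst hxj
      rw [Equiv.swap_apply_right]
      simp only [Fin.lt_def]
      omega
    · rw [Equiv.swap_apply_of_ne_of_ne hxi hxj]
  simp only [hx]

private lemma code_i_v (u : Equiv.Perm (Fin n)) {i j : Fin n} (hij : i < j) :
    permCode (u * Equiv.swap i j) i
      = (if u i < u j then 1 else 0)
        + ∑ x : Fin n, if i < x ∧ x ≠ j ∧ u x < u j then 1 else 0 := by
  have h := swap_sum j
      (fun x => if i < x ∧ (u * Equiv.swap i j) x < (u * Equiv.swap i j) i then (1 : ℕ) else 0)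
      (fun x => if i < x ∧ x ≠ j ∧ u x < u j then 1 else 0)
      (fun x hxj => by
        rcases eq_or_ne x i with rfl | hxi
        · simp
        · simp only [Equiv.Perm.mul_apply, Equiv.swap_apply_left,
            Equiv.swap_apply_of_ne_of_ne hxi hxj]
          simp [hxj])
  beta_reduce at h
  have h1 : (if i < j ∧ j ≠ j ∧ u j < u j then (1 : ℕ) else 0) = 0 := by simp
  have h2 : (if i < j ∧ (u * Equiv.swap i j) j < (u * Equiv.swap i j) i then (1 : ℕ) else 0)
      = if u i < u j then 1 else 0 := by
    simp only [Equiv.Perm.mul_apply, Equiv.swap_apply_left, Equiv.swap_apply_right]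
    simp [hij]
  rw [permCode_eq_sum]
  omega

private lemma code_i_w (u : Equiv.Perm (Fin n)) {i j : Fin n} (hij : i < j) :
    permCode u i
      = (if u j < u i then 1 else 0)
        + ∑ x : Fin n, if i < x ∧ x ≠ j ∧ u x < u i then 1 else 0 := by
  have h := swap_sum j
      (fun x => if i < x ∧ u x < u i then (1 : ℕ) else 0)
      (fun x => if i < x ∧ x ≠ j ∧ u x < u i then 1 else 0)
      (fun x hxj => by simp [hxj])
  beta_reduce at h
  have h1 : (if i < j ∧ j ≠ j ∧ u j < u i then (1 : ℕ) else 0) = 0 := by simp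
  have h2 : (if i < j ∧ u j < u i then (1 : ℕ) else 0) = if u j < u i then 1 else 0 := by
    simp [hij]
  rw [permCode_eq_sum]
  omega

private lemma code_j_v (u : Equiv.Perm (Fin n)) {i j : Fin n} (hij : i < j) :
    permCode (u * Equiv.swap i j) j = ∑ x : Fin n, if j < x ∧ u x < u i then 1 else 0 := by
  rw [permCode_eq_sum]
  refine Finset.sum_congr rfl fun x _ => ?_
  rcases eq_or_ne x i with rfl | hxi
  · simp [lt_asymm hij]
  rcases eq_or_ne x j with rfl | hxj
  · simp
  · simp only [Equiv.Perm.mul_apply, Equiv.swap_apply_right,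
      Equiv.swap_apply_of_ne_of_ne hxi hxj]

private lemma code_mid (u : Equiv.Perm (Fin n)) {i j k : Fin n} (hik : i < k) (hkj : k < j) :
    permCode (u * Equiv.swap i j) k + (if u j < u k then 1 else 0)
      = permCode u k + (if u i < u k then 1 else 0) := by
  have hki : k ≠ i := hik.ne'
  have hkj' : k ≠ j := hkj.ne
  have hv := swap_sum j
      (fun x => if k < x ∧ (u * Equiv.swap i j) x < (u * Equiv.swap i j) k then (1 : ℕ) else 0)
      (fun x => if k < x ∧ x ≠ j ∧ u x < u k then 1 else 0)
      (fun x hxj => by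
        rcases eq_or_ne x i with rfl | hxi
        · simp [lt_asymm hik]
        · simp only [Equiv.Perm.mul_apply, Equiv.swap_apply_of_ne_of_ne hxi hxj,
            Equiv.swap_apply_of_ne_of_ne hki hkj']
          simp [hxj])
  beta_reduce at hv
  have hu := swap_sum j
      (fun x => if k < x ∧ u x < u k then (1 : ℕ) else 0)
      (fun x => if k < x ∧ x ≠ j ∧ u x < u k then 1 else 0)
      (fun x hxj => by simp [hxj])
  beta_reduce at hu
  have h1 : (if k < j ∧ j ≠ j ∧ u j < u k then (1 : ℕ) else 0) = 0 := by simp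
  have h2 : (if k < j ∧ (u * Equiv.swap i j) j < (u * Equiv.swap i j) k then (1 : ℕ) else 0)
      = if u i < u k then 1 else 0 := by
    simp only [Equiv.Perm.mul_apply, Equiv.swap_apply_right,
      Equiv.swap_apply_of_ne_of_ne hki hkj']
    simp [hkj]
  have h3 : (if k < j ∧ u j < u k then (1 : ℕ) else 0) = if u j < u k then 1 else 0 := by
    simp [hkj]
  rw [permCode_eq_sum (u * Equiv.swap i j), permCode_eq_sum u]
  omega

private lemma code_mid_le (u : Equiv.Perm (Fin n)) {i j k : Fin n} (hui : u i < u j)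
    (hik : i < k) (hkj : k < j) :
    permCode u k ≤ permCode (u * Equiv.swap i j) k := by
  have hm := code_mid u hik hkj
  have hle : (if u j < u k then (1 : ℕ) else 0) ≤ if u i < u k then 1 else 0 :=
    ite_le_ite fun hh => hui.trans hh
  omega

private lemma d_nonneg (u : Equiv.Perm (Fin n)) {i j k : Fin n} (hij : i < j)
    (hui : u i < u j) (hki : k ≠ i) (hkj : k ≠ j) :
    permCode u k ≤ permCode (u * Equiv.swap i j) k := by
  rcases lt_or_gt_of_ne hki with h | h
  · exact (code_out u hij (Or.inl h)).ge
  rcases lt_or_gt_of_ne hkj with h2 | h2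
  · exact code_mid_le u hui h h2
  · exact (code_out u hij (Or.inr h2)).ge

private lemma ineq_AB (u : Equiv.Perm (Fin n)) {i j : Fin n} (hui : u i < u j) :
    (∑ x : Fin n, if i < x ∧ x ≠ j ∧ u x < u i then (1 : ℕ) else 0)
      ≤ ∑ x : Fin n, if i < x ∧ x ≠ j ∧ u x < u j then 1 else 0 :=
  Finset.sum_le_sum fun x _ => ite_le_ite fun ⟨h1, h2, h3⟩ => ⟨h1, h2, h3.trans hui⟩

private lemma ineq_CD (u : Equiv.Perm (Fin n)) {i j : Fin n} (hui : u i < u j) :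
    (∑ x : Fin n, if j < x ∧ u x < u i then (1 : ℕ) else 0)
      ≤ ∑ x : Fin n, if j < x ∧ u x < u j then 1 else 0 :=
  Finset.sum_le_sum fun x _ => ite_le_ite fun ⟨h1, h3⟩ => ⟨h1, h3.trans hui⟩

private lemma ineq_DA (u : Equiv.Perm (Fin n)) {i j : Fin n} (hij : i < j)
    (hui : u i < u j) :
    (∑ x : Fin n, if j < x ∧ u x < u j then (1 : ℕ) else 0)
      + (∑ x : Fin n, if i < x ∧ x ≠ j ∧ u x < u i then (1 : ℕ) else 0)
    ≤ (∑ x : Fin n, if j < x ∧ u x < u i then (1 : ℕ) else 0)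
      + (∑ x : Fin n, if i < x ∧ x ≠ j ∧ u x < u j then (1 : ℕ) else 0) := by
  rw [← Finset.sum_add_distrib, ← Finset.sum_add_distrib]
  refine Finset.sum_le_sum fun x _ => ?_
  by_cases hjx : j < x
  · have h1 : i < x := hij.trans hjx
    have h2 : x ≠ j := hjx.ne'
    simp only [hjx, h1, h2, true_and, ne_eq, not_false_eq_true]
    exact (add_comm _ _).le
  · simp only [hjx, false_and, if_false, zero_add, add_zero]
    exact ite_le_ite fun ⟨h1, h2, h3⟩ => ⟨h1, h2, h3.trans hui⟩

private lemma key_ge (u : Equiv.Perm (Fin n)) {i j : Fin n} (hij : i < j)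
    (hui : u i < u j) :
    permLen u + 1 ≤ permLen (u * Equiv.swap i j) := by
  have hsplit_v := sum_split (fun k => permCode (u * Equiv.swap i j) k) hij.ne
  have hsplit_u := sum_split (fun k => permCode u k) hij.ne
  beta_reduce at hsplit_v hsplit_u
  have hR : (∑ k ∈ (Finset.univ.erase i).erase j, permCode u k)
      ≤ ∑ k ∈ (Finset.univ.erase i).erase j, permCode (u * Equiv.swap i j) k := by
    refine Finset.sum_le_sum fun k hk => ?_
    obtain ⟨hkj, hki, -⟩ := Finset.mem_erase.mp hk |>.imp id (fun h => Finset.mem_erase.mp h)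
    exact d_nonneg u hij hui hki hkj
  have hi_v := code_i_v u hij
  have hi_u := code_i_w u hij
  have hj_v := code_j_v u hij
  have hj_u := permCode_eq_sum u j
  have hDA := ineq_DA u hij hui
  have h1 : (if u i < u j then (1 : ℕ) else 0) = 1 := if_pos hui
  have h2 : (if u j < u i then (1 : ℕ) else 0) = 0 := if_neg (lt_asymm hui)
  rw [permLen_eq_sum, permLen_eq_sum, hsplit_v, hsplit_u]
  omega

end CodeWeightAux

/-- If `w ⋖_S w t_{ij}` is a strong Bruhat cover, then the Lehmer codes of `w` and
`w t_{ij}` agree in every position other than `i` and `j`, and the Manhattan distance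
`c(w, w t_{ij})` between the codes is an odd positive integer. -/
theorem code_weight_odd (n : ℕ) (hn : 2 ≤ n) (w : Equiv.Perm (Fin n)) (i j : Fin n)
    (hij : i < j) (hcov : permLen (w * Equiv.swap i j) = permLen w + 1) :
    (∀ k : Fin n, k ≠ i → k ≠ j → permCode w k = permCode (w * Equiv.swap i j) k) ∧
    Odd (codeDist w (w * Equiv.swap i j)) ∧
    0 < codeDist w (w * Equiv.swap i j) := by
  classical
  -- First show `w i < w j`.
  have hwij : w i < w j := by
    rcases lt_trichotomy (w i) (w j) with h | h | h
    · exact h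
    · exact absurd (w.injective h) hij.ne
    · exfalso
      have hvi : (w * Equiv.swap i j) i = w j := by
        simp [Equiv.Perm.mul_apply]
      have hvj : (w * Equiv.swap i j) j = w i := by
        simp [Equiv.Perm.mul_apply]
      have hv2 : (w * Equiv.swap i j) * Equiv.swap i j = w := by
        rw [mul_assoc, Equiv.swap_mul_self, mul_one]
      have hk := key_ge (w * Equiv.swap i j) hij (by rw [hvi, hvj]; exact h)
      rw [hv2] at hk
      omega
  have hsplit_v := sum_split (fun k => permCode (w * Equiv.swap i j) k) hij.ne
  have hsplit_u := sum_split (fun k => permCode w k) hij.ne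
  beta_reduce at hsplit_v hsplit_u
  have hRle : ∀ k ∈ (Finset.univ.erase i).erase j,
      permCode w k ≤ permCode (w * Equiv.swap i j) k := by
    intro k hk
    obtain ⟨hkj, hk2⟩ := Finset.mem_erase.mp hk
    obtain ⟨hki, -⟩ := Finset.mem_erase.mp hk2
    exact d_nonneg w hij hwij hki hkj
  have hR : (∑ k ∈ (Finset.univ.erase i).erase j, permCode w k)
      ≤ ∑ k ∈ (Finset.univ.erase i).erase j, permCode (w * Equiv.swap i j) k :=
    Finset.sum_le_sum hRle
  have hi_v := code_i_v w hij
  have hi_u := code_i_w w hij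
  have hj_v := code_j_v w hij
  have hj_u := permCode_eq_sum w j
  have hAB := ineq_AB w hwij
  have hCD := ineq_CD w hwij
  have hDA := ineq_DA w hij hwij
  have h1 : (if w i < w j then (1 : ℕ) else 0) = 1 := if_pos hwij
  have h2 : (if w j < w i then (1 : ℕ) else 0) = 0 := if_neg (lt_asymm hwij)
  have hlen_v := permLen_eq_sum (w * Equiv.swap i j)
  have hlen_u := permLen_eq_sum w
  -- total equality of the erased sums
  have hRR : (∑ k ∈ (Finset.univ.erase i).erase j, permCode w k)
      = ∑ k ∈ (Finset.univ.erase i).erase j, permCode (w * Equiv.swap i j) k := by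
    omega
  have hpt := (Finset.sum_eq_sum_iff_of_le hRle).mp hRR
  have part1 : ∀ k : Fin n, k ≠ i → k ≠ j →
      permCode w k = permCode (w * Equiv.swap i j) k := by
    intro k hki hkj
    exact hpt k (Finset.mem_erase.mpr ⟨hkj, Finset.mem_erase.mpr ⟨hki, Finset.mem_univ k⟩⟩)
  refine ⟨part1, ?_, ?_⟩ <;>
  · have hdist : codeDist w (w * Equiv.swap i j)
        = Nat.dist (permCode w i) (permCode (w * Equiv.swap i j) i)
          + Nat.dist (permCode w j) (permCode (w * Equiv.swap i j) j)
          + ∑ k ∈ (Finset.univ.erase i).erase j,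
              Nat.dist (permCode w k) (permCode (w * Equiv.swap i j) k) := by
      rw [codeDist]
      exact sum_split _ hij.ne
    have hz : (∑ k ∈ (Finset.univ.erase i).erase j,
        Nat.dist (permCode w k) (permCode (w * Equiv.swap i j) k)) = 0 := by
      refine Finset.sum_eq_zero fun k hk => ?_
      rw [hpt k hk]
      exact Nat.dist_self _
    have hle_i : permCode w i ≤ permCode (w * Equiv.swap i j) i := by omega
    have hle_j : permCode (w * Equiv.swap i j) j ≤ permCode w j := by omega
    have hd_i := Nat.dist_eq_sub_of_le hle_i
    have hd_j := Nat.dist_eq_sub_of_le_right hle_j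
    first
    | exact ⟨(∑ x : Fin n, if i < x ∧ x ≠ j ∧ w x < w j then (1 : ℕ) else 0)
        - ∑ x : Fin n, if i < x ∧ x ≠ j ∧ w x < w i then (1 : ℕ) else 0, by omega⟩
    | omega
end

section
/- Let w ∈ S_n and let t be a transposition such that w ⋖_S w t is a covering relation of the strong Bruhat order. Then w₀ w t ⋖_S w₀ w is also a strong Bruhat cover, and the code weights agree: c(w, wt) = c(w₀ w t, w₀ w). Consequently, for all v, w ∈ S_n one has m_Δ(v, w) = m_Δ(w₀ w, w₀ v). -/
open Equiv Finset MvPolynomial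

lemma code_sum {n : ℕ} (w : Equiv.Perm (Fin n)) (i : Fin n) :
    permCode w i + permCode (longest n * w) i
      = (Finset.univ.filter fun j => i < j).card := by
  unfold permCode longest
  have h2 : (Finset.univ.filter fun j => i < j ∧ (Fin.revPerm * w : Equiv.Perm (Fin n)) j < (Fin.revPerm * w : Equiv.Perm (Fin n)) i)
      = Finset.univ.filter fun j => i < j ∧ ¬ (w j < w i) := by
    apply Finset.filter_congr
    intro j _
    simp only [Equiv.Perm.mul_apply, Fin.revPerm_apply, Fin.rev_lt_rev, not_lt]
    constructor
    · rintro ⟨h, h'⟩; exact ⟨h, h'.le⟩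
    · rintro ⟨h, h'⟩
      exact ⟨h, lt_of_le_of_ne h' (fun he => h.ne' (w.injective he.symm))⟩
  rw [h2]
  have e1 : (Finset.univ.filter fun j => i < j ∧ w j < w i)
      = (Finset.univ.filter fun j : Fin n => i < j).filter (fun j => w j < w i) := by
    rw [Finset.filter_filter]
  have e2 : (Finset.univ.filter fun j => i < j ∧ ¬ (w j < w i))
      = (Finset.univ.filter fun j : Fin n => i < j).filter (fun j => ¬ (w j < w i)) := by
    rw [Finset.filter_filter]
  rw [e1, e2, Finset.card_filter_add_card_filter_not]

lemma len_sum {n : ℕ} (w : Equiv.Perm (Fin n)) :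
    permLen w + permLen (longest n * w)
      = (Finset.univ.filter fun p : Fin n × Fin n => p.1 < p.2).card := by
  unfold permLen longest
  have h2 : (Finset.univ.filter fun p : Fin n × Fin n => p.1 < p.2 ∧ (Fin.revPerm * w : Equiv.Perm (Fin n)) p.2 < (Fin.revPerm * w : Equiv.Perm (Fin n)) p.1)
      = Finset.univ.filter fun p : Fin n × Fin n => p.1 < p.2 ∧ ¬ (w p.2 < w p.1) := by
    apply Finset.filter_congr
    intro p _
    simp only [Equiv.Perm.mul_apply, Fin.revPerm_apply, Fin.rev_lt_rev, not_lt]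
    constructor
    · rintro ⟨h, h'⟩; exact ⟨h, h'.le⟩
    · rintro ⟨h, h'⟩
      exact ⟨h, lt_of_le_of_ne h' (fun he => h.ne' (w.injective he.symm))⟩
  rw [h2]
  have e1 : (Finset.univ.filter fun p : Fin n × Fin n => p.1 < p.2 ∧ w p.2 < w p.1)
      = (Finset.univ.filter fun p : Fin n × Fin n => p.1 < p.2).filter (fun p => w p.2 < w p.1) := by
    rw [Finset.filter_filter]
  have e2 : (Finset.univ.filter fun p : Fin n × Fin n => p.1 < p.2 ∧ ¬ (w p.2 < w p.1))
      = (Finset.univ.filter fun p : Fin n × Fin n => p.1 < p.2).filter (fun p => ¬ (w p.2 < w p.1)) := by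
    rw [Finset.filter_filter]
  rw [e1, e2, Finset.card_filter_add_card_filter_not]

lemma codeDist_longest {n : ℕ} (u v : Equiv.Perm (Fin n)) :
    codeDist (longest n * u) (longest n * v) = codeDist u v := by
  unfold codeDist
  refine Finset.sum_congr rfl fun i _ => ?_
  have hu := code_sum u i
  have hv := code_sum v i
  simp only [Nat.dist]
  omega

lemma codeDist_comm {n : ℕ} (u v : Equiv.Perm (Fin n)) :
    codeDist u v = codeDist v u := by
  unfold codeDist
  exact Finset.sum_congr rfl fun i _ => Nat.dist_comm _ _

lemma deltaMat_symm {n : ℕ} (u v : Equiv.Perm (Fin n)) :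
    deltaMat n u v = deltaMat n (longest n * v) (longest n * u) := by
  unfold deltaMat
  simp only [Matrix.of_apply]
  have hc : ((∃ p : Fin n × Fin n, p.1 < p.2 ∧ v = u * Equiv.swap p.1 p.2) ∧
        permLen v = permLen u + 1) ↔
      ((∃ p : Fin n × Fin n, p.1 < p.2 ∧
          longest n * u = longest n * v * Equiv.swap p.1 p.2) ∧
        permLen (longest n * u) = permLen (longest n * v) + 1) := by
    have hu := len_sum u
    have hv := len_sum v
    constructor
    · rintro ⟨⟨p, hp, he⟩, hl⟩
      refine ⟨⟨p, hp, ?_⟩, by omega⟩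
      rw [he, mul_assoc, mul_assoc, Equiv.swap_mul_self, mul_one]
    · rintro ⟨⟨p, hp, he⟩, hl⟩
      refine ⟨⟨p, hp, ?_⟩, by omega⟩
      have : longest n * u * Equiv.swap p.1 p.2 = longest n * v := by
        rw [he, mul_assoc, mul_assoc, Equiv.swap_mul_self, mul_one]
      have := mul_left_cancel ((mul_assoc _ _ _).symm.trans this)
      rw [← this]
  rw [if_congr hc rfl rfl]
  by_cases h : (∃ p : Fin n × Fin n, p.1 < p.2 ∧
      longest n * u = longest n * v * Equiv.swap p.1 p.2) ∧
      permLen (longest n * u) = permLen (longest n * v) + 1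
  · rw [if_pos h, if_pos h, codeDist_comm, codeDist_longest]
  · rw [if_neg h, if_neg h]

lemma pow_symm {n : ℕ} (k : ℕ) (u v : Equiv.Perm (Fin n)) :
    (deltaMat n ^ k) u v = (deltaMat n ^ k) (longest n * v) (longest n * u) := by
  induction k generalizing u v with
  | zero =>
    simp only [pow_zero, Matrix.one_apply]
    by_cases h : u = v
    · rw [if_pos h, if_pos (by rw [h])]
    · rw [if_neg h, if_neg (fun hh => h (mul_left_cancel hh).symm)]
  | succ k ih =>
    conv_lhs => rw [pow_succ]
    conv_rhs => rw [pow_succ']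
    rw [Matrix.mul_apply, Matrix.mul_apply]
    rw [← Fintype.sum_equiv (Equiv.mulLeft (longest n))
      (fun x => (deltaMat n ^ k) u x * deltaMat n x v)
      (fun y => deltaMat n (longest n * v) y * (deltaMat n ^ k) y (longest n * u))
      (fun x => by
        simp only [Equiv.coe_mulLeft]
        rw [ih, deltaMat_symm x v, Nat.mul_comm])]

lemma mDelta_symm {n : ℕ} (v u : Equiv.Perm (Fin n)) :
    mDelta n v u = mDelta n (longest n * u) (longest n * v) := by
  unfold mDelta
  have h1 := len_sum u
  have h2 := len_sum v
  have he : permLen u - permLen v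
      = permLen (longest n * v) - permLen (longest n * u) := by omega
  rw [he, pow_symm]

/-- If `t` is a transposition and `w ⋖_S wt` is a strong Bruhat cover, then
`w₀ w t ⋖_S w₀ w` is also a strong Bruhat cover with the same code weight,
`c(w, wt) = c(w₀ w t, w₀ w)`; consequently `m_Δ(v, w) = m_Δ(w₀ w, w₀ v)`
for all `v, w`. -/
theorem delta_w0_symmetry (n : ℕ) (hn : 2 ≤ n) (w t : Equiv.Perm (Fin n))
    (ht : ∃ i j : Fin n, i ≠ j ∧ t = Equiv.swap i j)
    (hcov : permLen (w * t) = permLen w + 1) :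
    (permLen (longest n * w * t) + 1 = permLen (longest n * w) ∧
      codeDist w (w * t) = codeDist (longest n * w * t) (longest n * w)) ∧
    ∀ v u : Equiv.Perm (Fin n),
      mDelta n v u = mDelta n (longest n * u) (longest n * v) := by
  have hw := len_sum w
  have hwt := len_sum (w * t)
  refine ⟨⟨?_, ?_⟩, fun v u => mDelta_symm v u⟩
  · rw [mul_assoc]; omega
  · rw [mul_assoc, codeDist_longest, codeDist_comm]
end

section
/- There exist subsets A_m ⊆ P_m^M, for 0 ≤ m ≤ ⌊|M|/2⌋, with #A_m = p_m − p_{m−1}, such that for every n with 2n ≤ |M|, the family B_n = ⋃_{0 ≤ m ≤ n} { (U_M^{n−m}/(n−m)!)(f) : f ∈ A_m } is a ℤ-basis of the free ℤ-module ℤP_n^M. -/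
open Finset

/-- The rank-`n` elements of the product of chains of lengths `M 0, …, M (k-1)`:
tuples `α` with `α i ≤ M i` for all `i` and `Σ α i = n`. -/
abbrev Pel {k : ℕ} (M : Fin k → ℕ) (n : ℕ) : Type :=
  {α : ∀ i, Fin (M i + 1) // ∑ i, (α i : ℕ) = n}

/-- `|M| = M 1 + ⋯ + M k`, the rank of the top element of the product of chains. -/
abbrev totalM {k : ℕ} (M : Fin k → ℕ) : ℕ := ∑ i, M i

/-- The matrix entry of `U_M^(n-m)/(n-m)!` at `(α, β)` for `α` of rank `m` and `β` of
rank `n`: it is `∏ i, choose (β i) (α i)`, which vanishes unless `α ≤ β`. -/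
def uEntry {k : ℕ} (M : Fin k → ℕ) {m n : ℕ} (α : Pel M m) (β : Pel M n) : ℕ :=
  ∏ i, Nat.choose (β.1 i : ℕ) (α.1 i : ℕ)

/-- `prevP M m = p_{m-1}`, the number of elements of rank `m - 1`, with `p_{-1} = 0`. -/
def prevP {k : ℕ} (M : Fin k → ℕ) : ℕ → ℕ
  | 0 => 0
  | m + 1 => Fintype.card (Pel M m)

/-- The rank-symmetry bijection `α ↦ M - α` from rank `n` to rank `|M| - n`. -/
def cmpl {k : ℕ} (M : Fin k → ℕ) {n : ℕ} (α : Pel M n) : Pel M (totalM M - n) :=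
  ⟨fun i => ⟨M i - (α.1 i : ℕ), by omega⟩, by
    have h2 : ∀ i, (α.1 i : ℕ) ≤ M i := fun i => Nat.lt_succ_iff.mp (α.1 i).isLt
    have key : ∑ i, (M i - (α.1 i : ℕ)) + ∑ i, (α.1 i : ℕ) = ∑ i, M i := by
      rw [← Finset.sum_add_distrib]
      exact Finset.sum_congr rfl fun i _ => Nat.sub_add_cancel (h2 i)
    have h := α.2
    show ∑ i, (M i - (α.1 i : ℕ)) = (∑ i, M i) - n
    omega⟩

/-- The family `B` of elements of `ℤP_n^M` consisting, for each `m ≤ mtop`, of the images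
`U_M^(n-m)/(n-m)! f` of the elements `f ∈ A m` (expressed via the binomial matrix
entries of `U_M^(n-m)/(n-m)!`). -/
def bFam {k : ℕ} (M : Fin k → ℕ) (A : (m : ℕ) → Finset (Pel M m)) (mtop n : ℕ) :
    ((m : Fin (mtop + 1)) × {f : Pel M (m : ℕ) // f ∈ A (m : ℕ)}) → (Pel M n → ℤ) :=
  fun x β => ((uEntry M x.2.1 β : ℕ) : ℤ)

/-!
Induct on `k`, splitting off the last coordinate: with `M' = initM M`,
`ℤP_n^M = ⊕_j ℤP_{n-j}^{M'} ⊗ e_j`. The generators are the ballot tuples, and a generator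
`(α', t)` with `α'` of rank `r` is sent by `U_M^{n-m}/(n-m)!` to
`Σ_j C(j, t) · (U_{M'}^{n-j-r}/(n-j-r)!) α' ⊗ e_j`. In the bases of the `ℤP_{n-j}^{M'}` given by
induction these vectors have a block triangular transition matrix when generators are ordered by
decreasing `r`, and the block of a fixed `α'` is a window `(C(j₀ + b, a))_{a, b ≤ s}` of binomial
coefficients, of determinant `1` by Vandermonde's identity. For all levels of `M'` to be
available, the statement is proved for every `n ≤ |M|`, with the generators of rank at most
`min n (|M| - n)`.
-/

namespace ChainProduct

lemma choose_add_eq_sum (j b a : ℕ) :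
    (j + b).choose a = ∑ c ∈ range (a + 1), j.choose (a - c) * b.choose c := by
  rw [Nat.add_choose_eq, ← Finset.Nat.sum_antidiagonal_swap]
  exact Finset.Nat.sum_antidiagonal_eq_sum_range_succ (fun c d => j.choose d * b.choose c) a

lemma det_choose_add_eq_one (j s : ℕ) :
    (Matrix.of fun a b : Fin (s + 1) => ((j + b).choose a : ℤ)).det = 1 := by
  let L : Matrix (Fin (s + 1)) (Fin (s + 1)) ℤ :=
    Matrix.of fun a c => if c ≤ a then (j.choose (a - c) : ℤ) else 0
  let U : Matrix (Fin (s + 1)) (Fin (s + 1)) ℤ := Matrix.of fun c b => ((b : ℕ).choose c : ℤ)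
  have hLU : Matrix.of (fun a b : Fin (s + 1) => ((j + b).choose a : ℤ)) = L * U := by
    ext a b
    have ha : (a : ℕ) + 1 ≤ s + 1 := a.is_lt
    simp only [Matrix.mul_apply, L, U, Matrix.of_apply, ite_mul, zero_mul, Finset.sum_ite,
      Finset.sum_const_zero, add_zero, choose_add_eq_sum, Nat.cast_sum, Nat.cast_mul]
    symm
    refine Finset.sum_nbij (fun c : Fin (s + 1) => (c : ℕ)) ?_ Fin.val_injective.injOn ?_
      fun _ _ => rfl
    · intro c hc
      exact Finset.mem_range.mpr (Nat.lt_succ_of_le (Finset.mem_filter.mp hc).2)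
    · intro c hc
      have hca : c ≤ a := Nat.lt_succ_iff.mp (Finset.mem_range.mp hc)
      exact ⟨⟨c, by omega⟩, Finset.mem_filter.mpr ⟨Finset.mem_univ _, hca⟩, rfl⟩
  have hL : L.det = 1 := by
    rw [Matrix.det_of_isLowerTriangular L fun a c hac => if_neg (not_le.mpr hac)]
    simp [L]
  have hU : U.det = 1 := by
    rw [Matrix.det_of_isUpperTriangular fun c b hbc => by
      simp [U, Nat.choose_eq_zero_of_lt (show (b : ℕ) < c from hbc)]]
    simp [U]
  rw [hLU, Matrix.det_mul, hL, hU, mul_one]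

variable {k : ℕ}

lemma Pel.ext_val {M : Fin k → ℕ} {m : ℕ} {a b : Pel M m}
    (h : ∀ i, (a.1 i : ℕ) = (b.1 i : ℕ)) : a = b :=
  Subtype.ext (funext fun i => Fin.ext (h i))

lemma uEntry_eq_zero_of_lt {M : Fin k → ℕ} {m n : ℕ} (α : Pel M m) (β : Pel M n)
    (h : n < m) : uEntry M α β = 0 := by
  by_contra hne
  have hle : ∀ i, (α.1 i : ℕ) ≤ (β.1 i : ℕ) := fun i => by
    by_contra hlt
    exact hne (Finset.prod_eq_zero (Finset.mem_univ i) (Nat.choose_eq_zero_of_lt (not_le.mp hlt)))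
  have : m ≤ n := by
    rw [← α.2, ← β.2]
    exact Finset.sum_le_sum fun i _ => hle i
  omega

abbrev initM (M : Fin (k + 1) → ℕ) : Fin k → ℕ := fun i => M i.castSucc

lemma totalM_succ (M : Fin (k + 1) → ℕ) :
    totalM M = totalM (initM M) + M (Fin.last k) := Fin.sum_univ_castSucc _

/-- `ballot M a` says that `2 (a₀ + ⋯ + a_{i-1}) + a_i ≤ M₀ + ⋯ + M_{i-1}` for every `i`. -/
def ballot : ∀ {k : ℕ}, (Fin k → ℕ) → (Fin k → ℕ) → Bool
  | 0, _, _ => true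
  | _ + 1, M, a =>
      ballot (initM M) (Fin.init a) &&
        decide (2 * ∑ i, Fin.init a i + a (Fin.last _) ≤ totalM (initM M))

def gens (M : Fin k → ℕ) (m : ℕ) : Finset (Pel M m) :=
  univ.filter fun f => ballot M (fun i => (f.1 i : ℕ))

lemma mem_gens {M : Fin k → ℕ} {m : ℕ} {f : Pel M m} :
    f ∈ gens M m ↔ ballot M (fun i => (f.1 i : ℕ)) = true := by
  simp [gens]

/-- The index type of the family `bFam M (gens M) mtop n`. -/
abbrev Gen (M : Fin k → ℕ) (mtop : ℕ) : Type :=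
  (m : Fin (mtop + 1)) × {f : Pel M (m : ℕ) // f ∈ gens M (m : ℕ)}

lemma Gen.ext_val {M : Fin k → ℕ} {mtop : ℕ} {a b : Gen M mtop}
    (h : ∀ i, (a.2.1.1 i : ℕ) = (b.2.1.1 i : ℕ)) : a = b := by
  obtain ⟨ma, f₁, hf₁⟩ := a
  obtain ⟨mb, f₂, hf₂⟩ := b
  obtain rfl : ma = mb := by
    apply Fin.ext
    rw [← f₁.2, ← f₂.2]
    exact Finset.sum_congr rfl fun i _ => h i
  obtain rfl : f₁ = f₂ := Pel.ext_val h
  rfl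

abbrev GenEquiv (M : Fin k → ℕ) (n : ℕ) : Type :=
  Pel M n ≃ Gen M (min n (totalM M - n))

def genMatrix {M : Fin k → ℕ} {n mtop : ℕ} (e : Pel M n ≃ Gen M mtop) :
    Matrix (Pel M n) (Pel M n) ℤ :=
  Matrix.of fun x y => (uEntry M (e x).2.1 y : ℤ)

lemma linearIndependent_bFam_and_span_eq_top {M : Fin k → ℕ} {n mtop : ℕ}
    (e : Pel M n ≃ Gen M mtop) (he : IsUnit (genMatrix e).det) :
    LinearIndependent ℤ (bFam M (gens M) mtop n) ∧
      Submodule.span ℤ (Set.range (bFam M (gens M) mtop n)) = ⊤ := by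
  have hA : IsUnit (genMatrix e) := (Matrix.isUnit_iff_isUnit_det _).mpr he
  have hrows : (genMatrix e).row = bFam M (gens M) mtop n ∘ e := rfl
  constructor
  · exact (linearIndependent_equiv e).mp (hrows ▸ Matrix.linearIndependent_rows_of_isUnit hA)
  · rw [← e.surjective.range_comp, ← hrows, ← range_vecMulLinear, LinearMap.range_eq_top]
    exact Matrix.vecMul_surjective_iff_isUnit.mpr hA

section LastCoordinate

lemma Pel.sum_init_add_last {M : Fin (k + 1) → ℕ} {m : ℕ} (f : Pel M m) :
    ∑ i : Fin k, (f.1 i.castSucc : ℕ) + (f.1 (Fin.last k) : ℕ) = m := by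
  have h := f.2
  rwa [Fin.sum_univ_castSucc] at h

lemma Pel.sum_init_le {M : Fin (k + 1) → ℕ} {m : ℕ} (f : Pel M m) :
    ∑ i : Fin k, (f.1 i.castSucc : ℕ) ≤ totalM (initM M) :=
  Finset.sum_le_sum fun _ _ => Fin.is_le _

abbrev LastCoord (M : Fin (k + 1) → ℕ) (n : ℕ) : Type :=
  {j : Fin (M (Fin.last k) + 1) // (j : ℕ) ≤ n ∧ n ≤ totalM (initM M) + j}

abbrev Col (M : Fin (k + 1) → ℕ) (n : ℕ) : Type :=
  Σ j : LastCoord M n, Pel (initM M) (n - j.1)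

lemma Col.ext_val {M : Fin (k + 1) → ℕ} {n : ℕ} {a b : Col M n}
    (hj : (a.1.1 : ℕ) = b.1.1) (hv : ∀ i, (a.2.1 i : ℕ) = (b.2.1 i : ℕ)) : a = b := by
  obtain ⟨ja, γa⟩ := a
  obtain ⟨jb, γb⟩ := b
  obtain rfl : ja = jb := Subtype.ext (Fin.ext hj)
  obtain rfl : γa = γb := Pel.ext_val hv
  rfl

lemma Col.level_le {M : Fin (k + 1) → ℕ} {n : ℕ} (z : Col M n) :
    n - (z.1.1 : ℕ) ≤ totalM (initM M) := by
  have := z.1.2.2; omega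

lemma val_snoc {M : Fin (k + 1) → ℕ} (α : ∀ i : Fin k, Fin (initM M i + 1))
    (j : Fin (M (Fin.last k) + 1)) :
    (fun i => ((Fin.snoc α j : ∀ i, Fin (M i + 1)) i : ℕ)) = Fin.snoc (fun i => (α i : ℕ)) j := by
  funext i
  induction i using Fin.lastCases <;> simp

lemma sum_val_snoc {M : Fin (k + 1) → ℕ} {r : ℕ} (α : Pel (initM M) r)
    (j : Fin (M (Fin.last k) + 1)) :
    ∑ i, ((Fin.snoc α.1 j : ∀ i, Fin (M i + 1)) i : ℕ) = r + j := by
  rw [val_snoc, Fin.sum_univ_castSucc]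
  simp only [Fin.snoc_castSucc, Fin.snoc_last, α.2]

def pelEquivCol (M : Fin (k + 1) → ℕ) (n : ℕ) : Pel M n ≃ Col M n where
  toFun f :=
    ⟨⟨f.1 (Fin.last k), by have := Pel.sum_init_add_last f; omega,
        by have := Pel.sum_init_add_last f; have := Pel.sum_init_le f; omega⟩,
      ⟨Fin.init f.1, by have := Pel.sum_init_add_last f; simp only [Fin.init]; omega⟩⟩
  invFun z := ⟨Fin.snoc z.2.1 z.1.1, by rw [sum_val_snoc]; have := z.1.2; omega⟩
  left_inv f := by
    apply Pel.ext_val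
    intro i
    induction i using Fin.lastCases with
    | last => simp
    | cast i => simp [Fin.init]
  right_inv z := Col.ext_val (by simp) fun i => by simp [Fin.init]

end LastCoordinate

section Rows

variable {M : Fin (k + 1) → ℕ} {n : ℕ}

lemma ballot_snoc (M : Fin (k + 1) → ℕ) (a : Fin k → ℕ) (t : ℕ) :
    ballot M (Fin.snoc a t) =
      (ballot (initM M) a && decide (2 * ∑ i, a i + t ≤ totalM (initM M))) := by
  simp [ballot]

variable (M n) in
abbrev Row : Type := Gen M (min n (totalM M - n))

def initRank (x : Row M n) : ℕ := ∑ i : Fin k, (x.2.1.1 i.castSucc : ℕ)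

def lastCoord (x : Row M n) : ℕ := x.2.1.1 (Fin.last k)

def initPart (x : Row M n) : Pel (initM M) (initRank x) := ⟨fun i => x.2.1.1 i.castSucc, rfl⟩

lemma initPart_mem_gens_and_le (x : Row M n) :
    initPart x ∈ gens (initM M) (initRank x) ∧
      2 * initRank x + lastCoord x ≤ totalM (initM M) := by
  have h := mem_gens.mp x.2.2
  rw [ballot, Bool.and_eq_true, decide_eq_true_eq] at h
  exact ⟨mem_gens.mpr h.1, h.2⟩

lemma Row.bounds (x : Row M n) :
    initRank x + lastCoord x ≤ min n (totalM M - n) ∧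
      2 * initRank x + lastCoord x ≤ totalM (initM M) ∧ lastCoord x ≤ M (Fin.last k) := by
  refine ⟨?_, (initPart_mem_gens_and_le x).2, Fin.is_le _⟩
  rw [initRank, lastCoord, Pel.sum_init_add_last]
  exact Fin.is_le _

lemma uEntry_pelEquivCol_symm (x : Row M n) (w : Col M n) :
    uEntry M x.2.1 ((pelEquivCol M n).symm w) =
      uEntry (initM M) (initPart x) w.2 * (w.1.1 : ℕ).choose (lastCoord x) := by
  rw [uEntry, Fin.prod_univ_castSucc]
  simp [pelEquivCol, uEntry, initPart, lastCoord]

section RowOf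

variable {r : ℕ} (α : Pel (initM M) r) (hα : α ∈ gens (initM M) r) (t : ℕ)
  (ht : t ≤ M (Fin.last k)) (h2 : 2 * r + t ≤ totalM (initM M))
  (hm : r + t ≤ min n (totalM M - n))

def rowOf : Row M n :=
  ⟨⟨r + t, by omega⟩, ⟨⟨Fin.snoc α.1 ⟨t, by omega⟩, sum_val_snoc α _⟩, by
    rw [mem_gens, val_snoc, ballot_snoc, α.2]
    simp [mem_gens.mp hα, h2]⟩⟩

variable {α hα t ht h2 hm}

lemma rowOf_castSucc (i : Fin k) : ((rowOf α hα t ht h2 hm).2.1.1 i.castSucc : ℕ) = α.1 i := by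
  simp [rowOf]

lemma initRank_rowOf : initRank (rowOf α hα t ht h2 hm) = r := by
  simp only [initRank, rowOf_castSucc, α.2]

lemma lastCoord_rowOf : lastCoord (rowOf α hα t ht h2 hm) = t := by
  simp [lastCoord, rowOf]

lemma initPart_rowOf : (initPart (rowOf α hα t ht h2 hm)).1 = α.1 :=
  funext fun i => Fin.ext (rowOf_castSucc (hα := hα) (ht := ht) (h2 := h2) (hm := hm) i)

lemma rowOf_eq {x : Row M n} (hα' : ∀ i, (α.1 i : ℕ) = x.2.1.1 i.castSucc)
    (ht' : t = lastCoord x) : rowOf α hα t ht h2 hm = x :=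
  Gen.ext_val fun i => by
    induction i using Fin.lastCases with
    | last => exact lastCoord_rowOf.trans ht'
    | cast i => exact (rowOf_castSucc i).trans (hα' i)

end RowOf

end Rows

section Reindexing

variable {M : Fin (k + 1) → ℕ} {n : ℕ}
  (eF : ∀ l, l ≤ totalM (initM M) → GenEquiv (initM M) l)

variable (M n) in
/-- A generator of `initM M` of rank `r` is a basis vector of level `n - j` exactly when
`windowStart M n r ≤ j ≤ n - r`. -/
def windowStart (r : ℕ) : ℕ := n + r - totalM (initM M)

lemma windowStart_bounds (hn : n ≤ totalM M) (x : Row M n) :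
    windowStart M n (initRank x) + lastCoord x ≤ M (Fin.last k) ∧
      windowStart M n (initRank x) + lastCoord x ≤ n ∧
      n ≤ totalM (initM M) + (windowStart M n (initRank x) + lastCoord x) ∧
      initRank x ≤ min (n - (windowStart M n (initRank x) + lastCoord x))
        (totalM (initM M) - (n - (windowStart M n (initRank x) + lastCoord x))) := by
  have := Row.bounds x
  have := totalM_succ M
  rw [windowStart, le_min_iff]
  omega

def initGen (hn : n ≤ totalM M) (x : Row M n) :
    Gen (initM M) (min (n - (windowStart M n (initRank x) + lastCoord x))
      (totalM (initM M) - (n - (windowStart M n (initRank x) + lastCoord x)))) :=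
  ⟨⟨initRank x, Nat.lt_succ_of_le (windowStart_bounds hn x).2.2.2⟩,
    ⟨initPart x, (initPart_mem_gens_and_le x).1⟩⟩

/-- The generator `(α', t)` is matched with the column `(windowStart + t, eF⁻¹ α')`. -/
def rowToCol (hn : n ≤ totalM M) (x : Row M n) : Col M n :=
  ⟨⟨⟨windowStart M n (initRank x) + lastCoord x, Nat.lt_succ_of_le (windowStart_bounds hn x).1⟩,
      (windowStart_bounds hn x).2.1, (windowStart_bounds hn x).2.2.1⟩,
    (eF (n - (windowStart M n (initRank x) + lastCoord x))
      (by have := (windowStart_bounds hn x).2.2.1; omega)).symm (initGen hn x)⟩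

lemma eF_rowToCol (hn : n ≤ totalM M) (x : Row M n) :
    eF _ (Col.level_le (rowToCol eF hn x)) (rowToCol eF hn x).2 = initGen hn x :=
  Equiv.apply_symm_apply _ _

lemma colToRow_bounds (z : Col M n) :
    let g := eF _ (Col.level_le z) z.2
    (z.1.1 : ℕ) - windowStart M n g.1 ≤ M (Fin.last k) ∧
      2 * (g.1 : ℕ) + ((z.1.1 : ℕ) - windowStart M n g.1) ≤ totalM (initM M) ∧
      (g.1 : ℕ) + ((z.1.1 : ℕ) - windowStart M n g.1) ≤ min n (totalM M - n) ∧
      windowStart M n g.1 ≤ z.1.1 := by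
  intro g
  have := le_min_iff.mp (Fin.is_le g.1)
  have := z.1.2
  have : (z.1.1 : ℕ) ≤ M (Fin.last k) := Fin.is_le _
  have := totalM_succ M
  rw [windowStart, le_min_iff]
  omega

def colToRow (z : Col M n) : Row M n :=
  let g := eF _ (Col.level_le z) z.2
  rowOf g.2.1 g.2.2 _ (colToRow_bounds eF z).1 (colToRow_bounds eF z).2.1
    (colToRow_bounds eF z).2.2.1

lemma eF_symm_val_congr {l₁ l₂ : ℕ} (hl : l₁ = l₂) (h₁ : l₁ ≤ totalM (initM M))
    (h₂ : l₂ ≤ totalM (initM M)) (g₁ : Gen (initM M) (min l₁ (totalM (initM M) - l₁)))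
    (g₂ : Gen (initM M) (min l₂ (totalM (initM M) - l₂)))
    (hg : ∀ i, (g₁.2.1.1 i : ℕ) = (g₂.2.1.1 i : ℕ)) (i : Fin k) :
    (((eF l₁ h₁).symm g₁).1 i : ℕ) = (((eF l₂ h₂).symm g₂).1 i : ℕ) := by
  subst hl
  rw [Gen.ext_val hg]

lemma colToRow_rowToCol (hn : n ≤ totalM M) (x : Row M n) :
    colToRow eF (rowToCol eF hn x) = x := by
  have hg := eF_rowToCol eF hn x
  apply Gen.ext_val
  intro i
  induction i using Fin.lastCases with
  | last =>
    change lastCoord (colToRow eF (rowToCol eF hn x)) = lastCoord x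
    simp only [colToRow, lastCoord_rowOf, hg]
    change windowStart M n (initRank x) + lastCoord x - windowStart M n (initRank x) = _
    omega
  | cast i =>
    simp only [colToRow, rowOf_castSucc]
    rw [hg]
    rfl

lemma rowToCol_colToRow (hn : n ≤ totalM M) (z : Col M n) :
    rowToCol eF hn (colToRow eF z) = z := by
  have hj : windowStart M n (initRank (colToRow eF z)) + lastCoord (colToRow eF z) = z.1.1 := by
    simp only [colToRow, initRank_rowOf, lastCoord_rowOf]
    have := (colToRow_bounds eF z).2.2.2
    omega
  refine Col.ext_val hj fun i => ?_
  change (((eF _ _).symm (initGen hn (colToRow eF z))).1 i : ℕ) = _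
  rw [eF_symm_val_congr eF (by rw [hj]) _ (Col.level_le z) _ (eF _ (Col.level_le z) z.2)
    (fun i' => by simp only [initGen, initPart, colToRow, rowOf_castSucc]) i,
    Equiv.symm_apply_apply]

def rowEquivCol (hn : n ≤ totalM M) : Row M n ≃ Col M n where
  toFun := rowToCol eF hn
  invFun := colToRow eF
  left_inv := colToRow_rowToCol eF hn
  right_inv := rowToCol_colToRow eF hn

end Reindexing

section Factorization

variable {M : Fin (k + 1) → ℕ} {n : ℕ}
  (eF : ∀ l, l ≤ totalM (initM M) → GenEquiv (initM M) l)

variable (n) in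
/-- The matrix of the basis `(j, γ) ↦ (image of eF γ) ⊗ e_j` of level `n`. -/
def blockDiagMatrix : Matrix (Col M n) (Col M n) ℤ :=
  Matrix.of fun z w =>
    if (z.1.1 : ℕ) = w.1.1 then (uEntry (initM M) (eF _ (Col.level_le z) z.2).2.1 w.2 : ℤ)
    else 0

variable (n) in
/-- Row `x = (α', t)` holds the coordinates of the image of `x` in the basis of
`blockDiagMatrix`. Its component at last coordinate `j` is `C(j, t)` times the image of `α'` at
level `n - j`, which is itself a basis vector unless `n - j + r > |initM M|`; in that case it is
expanded with the inverse of the basis matrix. -/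
noncomputable def transitionMatrix : Matrix (Row M n) (Col M n) ℤ :=
  Matrix.of fun x z =>
    if totalM (initM M) < n - z.1.1 + initRank x then
      ((z.1.1 : ℕ).choose (lastCoord x) : ℤ) *
        Matrix.vecMul (fun β => (uEntry (initM M) (initPart x) β : ℤ))
          (genMatrix (eF _ (Col.level_le z)))⁻¹ z.2
    else if (fun i => ((eF _ (Col.level_le z) z.2).2.1.1 i : ℕ)) = fun i => ((initPart x).1 i : ℕ)
    then ((z.1.1 : ℕ).choose (lastCoord x) : ℤ)
    else 0

lemma sum_transitionMatrix_mul_blockDiagMatrix (x : Row M n) (w : Col M n) :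
    ∑ z, transitionMatrix n eF x z * blockDiagMatrix n eF z w =
      ∑ γ : Pel (initM M) (n - w.1.1), transitionMatrix n eF x ⟨w.1, γ⟩ *
        genMatrix (eF _ (Col.level_le w)) γ w.2 := by
  rw [← Finset.univ_sigma_univ, Finset.sum_sigma, Finset.sum_eq_single w.1]
  · exact Finset.sum_congr rfl fun γ _ => by simp [blockDiagMatrix, genMatrix]
  · intro j _ hj
    refine Finset.sum_eq_zero fun γ _ => ?_
    have hjw : (j.1 : ℕ) ≠ w.1.1 := fun h => hj (Subtype.ext (Fin.ext h))
    simp [blockDiagMatrix, hjw]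
  · simp

lemma sum_transitionMatrix_mul_of_overflow (hF : ∀ l hl, IsUnit (genMatrix (eF l hl)).det)
    (x : Row M n) (w : Col M n) (hov : totalM (initM M) < n - w.1.1 + initRank x) :
    ∑ γ : Pel (initM M) (n - w.1.1), transitionMatrix n eF x ⟨w.1, γ⟩ *
        genMatrix (eF _ (Col.level_le w)) γ w.2 =
      ((w.1.1 : ℕ).choose (lastCoord x) : ℤ) * uEntry (initM M) (initPart x) w.2 := by
  simp only [transitionMatrix, Matrix.of_apply, if_pos hov, mul_assoc, ← Finset.mul_sum]
  congr 1
  change Matrix.vecMul (Matrix.vecMul _ (genMatrix (eF _ (Col.level_le w)))⁻¹)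
    (genMatrix (eF _ (Col.level_le w))) w.2 = _
  rw [Matrix.vecMul_vecMul, Matrix.nonsing_inv_mul _ (hF _ _), Matrix.vecMul_one]

lemma sum_transitionMatrix_mul_of_le (x : Row M n) (w : Col M n)
    (hov : n - w.1.1 + initRank x ≤ totalM (initM M)) (hr : initRank x ≤ n - w.1.1) :
    ∑ γ : Pel (initM M) (n - w.1.1), transitionMatrix n eF x ⟨w.1, γ⟩ *
        genMatrix (eF _ (Col.level_le w)) γ w.2 =
      ((w.1.1 : ℕ).choose (lastCoord x) : ℤ) * uEntry (initM M) (initPart x) w.2 := by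
  let g : Gen (initM M) (min (n - w.1.1) (totalM (initM M) - (n - w.1.1))) :=
    ⟨⟨initRank x, Nat.lt_succ_of_le (le_min hr (by omega))⟩,
      ⟨initPart x, (initPart_mem_gens_and_le x).1⟩⟩
  rw [Finset.sum_eq_single ((eF _ (Col.level_le w)).symm g)]
  · have hg : eF _ (Col.level_le w) ((eF _ (Col.level_le w)).symm g) = g :=
      Equiv.apply_symm_apply _ _
    simp only [transitionMatrix, genMatrix, Matrix.of_apply, if_neg (not_lt.mpr hov)]
    rw [hg, if_pos rfl]
  · intro γ _ hγ
    simp only [transitionMatrix, Matrix.of_apply, if_neg (not_lt.mpr hov)]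
    rw [if_neg, zero_mul]
    exact fun h => hγ ((Equiv.eq_symm_apply _).mpr (Gen.ext_val (congrFun h)))
  · simp

lemma sum_transitionMatrix_mul_of_lt (x : Row M n) (w : Col M n)
    (hov : n - w.1.1 + initRank x ≤ totalM (initM M)) (hr : n - w.1.1 < initRank x) :
    ∑ γ : Pel (initM M) (n - w.1.1), transitionMatrix n eF x ⟨w.1, γ⟩ *
        genMatrix (eF _ (Col.level_le w)) γ w.2 =
      ((w.1.1 : ℕ).choose (lastCoord x) : ℤ) * uEntry (initM M) (initPart x) w.2 := by
  rw [uEntry_eq_zero_of_lt _ _ hr, Nat.cast_zero, mul_zero]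
  refine Finset.sum_eq_zero fun γ _ => ?_
  simp only [transitionMatrix, Matrix.of_apply, if_neg (not_lt.mpr hov)]
  rw [if_neg, zero_mul]
  intro h
  have hrank : ((eF _ (Col.level_le w) γ).1 : ℕ) = initRank x := by
    rw [← (eF _ _ γ).2.1.2, ← (initPart x).2]
    exact Finset.sum_congr rfl fun i _ => congrFun h i
  have := le_min_iff.mp (Fin.is_le (eF _ (Col.level_le w) γ).1)
  omega

variable (n) in
def imageMatrix : Matrix (Row M n) (Col M n) ℤ :=
  Matrix.of fun x w => (uEntry M x.2.1 ((pelEquivCol M n).symm w) : ℤ)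

lemma transitionMatrix_mul_blockDiagMatrix (hF : ∀ l hl, IsUnit (genMatrix (eF l hl)).det) :
    transitionMatrix n eF * blockDiagMatrix n eF = imageMatrix n := by
  ext x w
  rw [Matrix.mul_apply, sum_transitionMatrix_mul_blockDiagMatrix, imageMatrix, Matrix.of_apply,
    uEntry_pelEquivCol_symm, Nat.cast_mul, mul_comm]
  by_cases hov : totalM (initM M) < n - w.1.1 + initRank x
  · exact sum_transitionMatrix_mul_of_overflow eF hF x w hov
  by_cases hr : initRank x ≤ n - w.1.1
  · exact sum_transitionMatrix_mul_of_le eF x w (not_lt.mp hov) hr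
  · exact sum_transitionMatrix_mul_of_lt eF x w (not_lt.mp hov) (not_le.mp hr)

end Factorization

section TransitionDet

variable {M : Fin (k + 1) → ℕ} {n : ℕ}

noncomputable def tupleCode (v : ∀ i : Fin k, Fin (initM M i + 1)) : ℕ :=
  Fintype.equivFin _ v

variable (M n) in
/-- Generators are ordered by decreasing rank of `α'`, ties broken by `α'` itself; the transition
matrix is block triangular for this order, each block collecting the `(α', t)` with one `α'`. -/
noncomputable def rowKey (x : Row M n) : Lex (ℕ × ℕ) :=
  toLex (totalM (initM M) - initRank x, tupleCode (initPart x).1)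

lemma eq_of_rowKey_eq {x y : Row M n} (h : rowKey M n x = rowKey M n y) :
    initRank x = initRank y ∧ (initPart x).1 = (initPart y).1 := by
  obtain ⟨hr, hc⟩ := Prod.mk.inj (toLex.injective h)
  have := (Row.bounds x).2.1
  have := (Row.bounds y).2.1
  exact ⟨by omega, (Fintype.equivFin _).injective (Fin.ext hc)⟩

variable (M n) in
def windowSize (r : ℕ) : ℕ :=
  min (M (Fin.last k)) (min (totalM (initM M) - 2 * r) (min n (totalM M - n) - r))

lemma rowKey_rowOf {r : ℕ} (α : Pel (initM M) r) (hα : α ∈ gens (initM M) r) (t : ℕ)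
    (ht : t ≤ M (Fin.last k)) (h2 : 2 * r + t ≤ totalM (initM M))
    (hm : r + t ≤ min n (totalM M - n)) :
    rowKey M n (rowOf α hα t ht h2 hm) = toLex (totalM (initM M) - r, tupleCode α.1) := by
  rw [rowKey, initPart_rowOf, initRank_rowOf]

noncomputable def windowEquiv (x₀ : Row M n) :
    {x : Row M n // rowKey M n x = rowKey M n x₀} ≃ Fin (windowSize M n (initRank x₀) + 1) where
  toFun y := ⟨lastCoord y.1, by
    have := (eq_of_rowKey_eq y.2).1
    have := Row.bounds y.1
    unfold windowSize
    omega⟩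
  invFun t := ⟨rowOf (initPart x₀) (initPart_mem_gens_and_le x₀).1 t
    (by have := t.is_le; unfold windowSize at this; omega)
    (by have := t.is_le; have := Row.bounds x₀; unfold windowSize at *; omega)
    (by have := t.is_le; have := Row.bounds x₀; unfold windowSize at *; omega),
    by rw [rowKey_rowOf]; rfl⟩
  left_inv y := by
    have hpart := (eq_of_rowKey_eq y.2).2
    apply Subtype.ext
    dsimp only
    exact rowOf_eq (fun i => congrArg Fin.val (congrFun hpart i).symm) rfl
  right_inv t := by
    apply Fin.ext
    dsimp only
    exact lastCoord_rowOf

variable (eF : ∀ l, l ≤ totalM (initM M) → GenEquiv (initM M) l) (hn : n ≤ totalM M)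

noncomputable def transitionSq : Matrix (Row M n) (Row M n) ℤ :=
  (transitionMatrix n eF).submatrix id (rowEquivCol eF hn)

lemma blockTriangular_transitionSq : (transitionSq eF hn).BlockTriangular (rowKey M n) := by
  intro x y hlt
  have hy := windowStart_bounds hn y
  simp only [transitionSq, transitionMatrix, Matrix.submatrix_apply, id, rowEquivCol,
    Equiv.coe_fn_mk, Matrix.of_apply]
  split_ifs with hov hα
  · exfalso
    have := (Row.bounds x).2.1
    have := (Row.bounds y).2.1
    rw [rowKey, rowKey, Prod.Lex.toLex_lt_toLex] at hlt
    change totalM (initM M) < n - (windowStart M n (initRank y) + lastCoord y) + initRank x at hov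
    rcases hlt with h | ⟨h, _⟩ <;> omega
  · exfalso
    rw [eF_rowToCol] at hα
    have hval : ∀ i, ((initPart y).1 i : ℕ) = ((initPart x).1 i : ℕ) := congrFun hα
    have hr : initRank y = initRank x := by
      rw [← (initPart y).2, ← (initPart x).2]
      exact Finset.sum_congr rfl fun i _ => hval i
    have hpart : (initPart y).1 = (initPart x).1 := funext fun i => Fin.ext (hval i)
    rw [rowKey, rowKey, hpart, hr] at hlt
    exact lt_irrefl _ hlt
  · rfl

lemma det_toSquareBlock_transitionSq (a : Lex (ℕ × ℕ))
    (ha : a ∈ Finset.image (rowKey M n) Finset.univ) :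
    ((transitionSq eF hn).toSquareBlock (rowKey M n) a).det = 1 := by
  obtain ⟨x₀, -, rfl⟩ := Finset.mem_image.mp ha
  have hblock : (transitionSq eF hn).toSquareBlock (rowKey M n) (rowKey M n x₀) =
      (Matrix.of fun a b : Fin (windowSize M n (initRank x₀) + 1) =>
        ((windowStart M n (initRank x₀) + b).choose a : ℤ)).submatrix
        (windowEquiv x₀) (windowEquiv x₀) := by
    ext y y'
    obtain ⟨hr, hpart⟩ := eq_of_rowKey_eq y.2
    obtain ⟨hr', hpart'⟩ := eq_of_rowKey_eq y'.2
    have := windowStart_bounds hn y'.1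
    simp only [Matrix.toSquareBlock_def, transitionSq, transitionMatrix, Matrix.of_apply,
      Matrix.submatrix_apply, id, rowEquivCol, Equiv.coe_fn_mk]
    rw [if_neg (by change ¬ _ < n - (_ + _) + _; omega), if_pos (by
      rw [eF_rowToCol]
      change (fun i => ((initPart y'.1).1 i : ℕ)) = _
      rw [hpart, hpart'])]
    change (((windowStart M n (initRank y'.1) + lastCoord y'.1).choose (lastCoord y.1) : ℕ) : ℤ) = _
    rw [hr']
    rfl
  rw [hblock, Matrix.det_submatrix_equiv_self, det_choose_add_eq_one]

lemma det_transitionSq : (transitionSq eF hn).det = 1 := by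
  rw [(blockTriangular_transitionSq eF hn).det]
  exact Finset.prod_eq_one fun a ha => det_toSquareBlock_transitionSq eF hn a ha

end TransitionDet

section Induction

variable {M : Fin (k + 1) → ℕ} {n : ℕ}
  (eF : ∀ l, l ≤ totalM (initM M) → GenEquiv (initM M) l)

lemma blockTriangular_blockDiagMatrix :
    (blockDiagMatrix n eF).BlockTriangular fun z : Col M n => (z.1.1 : ℕ) := by
  intro z w h
  simp [blockDiagMatrix, (show (z.1.1 : ℕ) ≠ w.1.1 from ne_of_gt h)]

def fiberEquiv (z₀ : Col M n) :
    {z : Col M n // (z.1.1 : ℕ) = z₀.1.1} ≃ Pel (initM M) (n - z₀.1.1) where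
  toFun z := cast (by rw [z.2]) z.1.2
  invFun γ := ⟨⟨z₀.1, γ⟩, rfl⟩
  left_inv z := by
    obtain ⟨⟨j, γ⟩, h⟩ := z
    obtain rfl : j = z₀.1 := Subtype.ext (Fin.ext h)
    rfl
  right_inv γ := rfl

lemma isUnit_det_toSquareBlock_blockDiagMatrix
    (hF : ∀ l hl, IsUnit (genMatrix (eF l hl)).det) (a : ℕ)
    (ha : a ∈ Finset.image (fun z : Col M n => (z.1.1 : ℕ)) Finset.univ) :
    IsUnit ((blockDiagMatrix n eF).toSquareBlock (fun z : Col M n => (z.1.1 : ℕ)) a).det := by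
  obtain ⟨z₀, -, rfl⟩ := Finset.mem_image.mp ha
  have hblock : (blockDiagMatrix n eF).toSquareBlock (fun z : Col M n => (z.1.1 : ℕ)) z₀.1.1 =
      (genMatrix (eF _ (Col.level_le z₀))).submatrix (fiberEquiv z₀) (fiberEquiv z₀) := by
    ext ⟨⟨j, γ⟩, h⟩ ⟨⟨j', γ'⟩, h'⟩
    obtain rfl : j = z₀.1 := Subtype.ext (Fin.ext h)
    obtain rfl : j' = z₀.1 := Subtype.ext (Fin.ext h')
    simp [blockDiagMatrix, genMatrix, fiberEquiv, Matrix.toSquareBlock_def]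
  rw [hblock, Matrix.det_submatrix_equiv_self]
  exact hF _ _

lemma isUnit_det_blockDiagMatrix (hF : ∀ l hl, IsUnit (genMatrix (eF l hl)).det) :
    IsUnit (blockDiagMatrix n eF).det := by
  rw [(blockTriangular_blockDiagMatrix eF).det]
  exact Finset.prod_induction _ IsUnit (fun _ _ => IsUnit.mul) isUnit_one
    (isUnit_det_toSquareBlock_blockDiagMatrix eF hF)

theorem exists_isUnit_det_genMatrix_succ (hn : n ≤ totalM M)
    (hF : ∀ l hl, IsUnit (genMatrix (eF l hl)).det) :
    ∃ e : GenEquiv M n, IsUnit (genMatrix e).det := by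
  let E := rowEquivCol eF hn
  let e : GenEquiv M n := (pelEquivCol M n).trans E.symm
  have hfactor : (genMatrix e).submatrix e.symm e.symm =
      transitionSq eF hn * (blockDiagMatrix n eF).submatrix E E := by
    rw [transitionSq, Matrix.submatrix_mul_equiv, transitionMatrix_mul_blockDiagMatrix eF hF]
    ext x y
    rw [Matrix.submatrix_apply, genMatrix, Matrix.of_apply, e.apply_symm_apply]
    rfl
  refine ⟨e, ?_⟩
  rw [← Matrix.det_submatrix_equiv_self e.symm, hfactor, Matrix.det_mul, det_transitionSq,
    Matrix.det_submatrix_equiv_self, one_mul]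
  exact isUnit_det_blockDiagMatrix eF hF

end Induction

theorem exists_isUnit_det_genMatrix_zero (M : Fin 0 → ℕ) {n : ℕ} (hn : n ≤ totalM M) :
    ∃ e : GenEquiv M n, IsUnit (genMatrix e).det := by
  obtain rfl : n = 0 := by simpa [totalM] using hn
  have : Unique (Pel M 0) := ⟨⟨⟨finZeroElim, by simp⟩⟩, fun x => Pel.ext_val finZeroElim⟩
  have : Unique (Gen M (min 0 (totalM M - 0))) :=
    ⟨⟨⟨0, ⟨finZeroElim, by simp⟩, mem_gens.mpr rfl⟩⟩, fun g => Gen.ext_val finZeroElim⟩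
  refine ⟨Equiv.ofUnique _ _, ?_⟩
  simp [Matrix.det_unique, genMatrix, uEntry]

theorem exists_isUnit_det_genMatrix :
    ∀ {k : ℕ} (M : Fin k → ℕ) {n : ℕ}, n ≤ totalM M →
      ∃ e : GenEquiv M n, IsUnit (genMatrix e).det
  | 0, M, _, hn => exists_isUnit_det_genMatrix_zero M hn
  | _ + 1, M, _, hn => by
    choose eF hF using fun l (hl : l ≤ totalM (initM M)) => exists_isUnit_det_genMatrix (initM M) hl
    exact exists_isUnit_det_genMatrix_succ eF hn hF

theorem exists_isUnit_det_genMatrix_of_two_mul_le (M : Fin k → ℕ) {n : ℕ}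
    (hn : 2 * n ≤ totalM M) : ∃ e : Pel M n ≃ Gen M n, IsUnit (genMatrix e).det := by
  have h : ∃ e : Pel M n ≃ Gen M (min n (totalM M - n)), IsUnit (genMatrix e).det :=
    exists_isUnit_det_genMatrix M (by omega)
  rwa [min_eq_left (show n ≤ totalM M - n by omega)] at h

lemma card_pel_eq_sum_card_gens (M : Fin k → ℕ) {n : ℕ} (hn : 2 * n ≤ totalM M) :
    Fintype.card (Pel M n) = ∑ j : Fin (n + 1), #(gens M j) := by
  obtain ⟨e, -⟩ := exists_isUnit_det_genMatrix_of_two_mul_le M hn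
  simp [Fintype.card_congr e, Fintype.card_sigma]

lemma card_gens_add_prevP (M : Fin k → ℕ) {m : ℕ} (hm : 2 * m ≤ totalM M) :
    #(gens M m) + prevP M m = Fintype.card (Pel M m) := by
  cases m with
  | zero => simp [card_pel_eq_sum_card_gens M hm, prevP]
  | succ m =>
    rw [card_pel_eq_sum_card_gens M hm, prevP, card_pel_eq_sum_card_gens M (by omega),
      Fin.sum_univ_castSucc (fun j : Fin (m + 2) => #(gens M j))]
    simp only [Fin.val_castSucc, Fin.val_last]
    ring

end ChainProduct

theorem exists_integral_basis_general {k : ℕ} (M : Fin k → ℕ) :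
    ∃ A : (m : ℕ) → Finset (Pel M m),
      (∀ m : ℕ, 2 * m ≤ totalM M →
        (A m).card + prevP M m = Fintype.card (Pel M m)) ∧
      (∀ n : ℕ, 2 * n ≤ totalM M →
        LinearIndependent ℤ (bFam M A n n) ∧
        Submodule.span ℤ (Set.range (bFam M A n n)) = ⊤) := by
  refine ⟨ChainProduct.gens M, fun m hm => ChainProduct.card_gens_add_prevP M hm, fun n hn => ?_⟩
  obtain ⟨e, he⟩ := ChainProduct.exists_isUnit_det_genMatrix_of_two_mul_le M hn
  exact ChainProduct.linearIndependent_bFam_and_span_eq_top e he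

/-- There exist subsets `A m ⊆ P_m^M` for `0 ≤ m ≤ |M|/2` with
`#(A m) = p_m - p_{m-1}` (stated additively), such that for every `n` with `2n ≤ |M|`
the family `B_n = ⋃_{m ≤ n} (U_M^(n-m)/(n-m)!) '' (A m)` is a `ℤ`-basis of `ℤP_n^M`
(i.e. it is linearly independent over `ℤ` and spans). -/
theorem exists_integral_basis {k : ℕ} (hk : 1 ≤ k) (M : Fin k → ℕ) :
    ∃ A : (m : ℕ) → Finset (Pel M m),
      (∀ m : ℕ, 2 * m ≤ totalM M →
        (A m).card + prevP M m = Fintype.card (Pel M m)) ∧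
      (∀ n : ℕ, 2 * n ≤ totalM M →
        LinearIndependent ℤ (bFam M A n n) ∧
        Submodule.span ℤ (Set.range (bFam M A n n)) = ⊤) :=
  exists_integral_basis_general M
end

section
/- Suppose subsets A_m ⊆ P_m^M for 0 ≤ m ≤ ⌊|M|/2⌋ satisfy #A_m = p_m − p_{m−1} and, for every n with 2n ≤ |M|, the family ⋃_{0 ≤ m ≤ n} { (U_M^{n−m}/(n−m)!)(f) : f ∈ A_m } is a ℤ-basis of ℤP_n^M. Then for every n' with |M|/2 ≤ n' ≤ |M|, the family B_{n'} = ⋃_{0 ≤ m ≤ |M|−n'} { (U_M^{n'−m}/(n'−m)!)(f) : f ∈ A_m } is a ℤ-basis of ℤP_{n'}^M. -/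
open Finset

/-!
On rank `n'`, the indicator of `β₀` is `β ↦ ∏ i, C(M i - β i, M i - β₀ i)`: at equal rank,
`β ≤ β₀` coordinatewise forces `β = β₀`. Expanding every factor in the binomial basis
`C(β i, t)`, `t ≤ M i - β₀ i`, writes it as an integral combination of columns of
`U_M^(n'-j)/(n'-j)!` with `j ≤ |M| - n'`. For `|M| ≤ 2n'` such a column is the image of a
basis vector of `ℤP_j^M`, an integral combination of `B_j` by hypothesis, and
`U^(n'-j)/(n'-j)! ∘ U^(j-m)/(j-m)! = C(n'-m, j-m) • U^(n'-m)/(n'-m)!` maps `B_j` into multiples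
of `B_{n'}`. So `B_{n'}` spans; it has `p_{|M|-n'} = p_{n'}` elements (telescoping, then
`α ↦ M - α`), and a spanning family of `ℤ^p` with `p` members is a basis.
-/

theorem Nat.add_choose_left_mul_choose (a d b : ℕ) :
    (a + d).choose a * b.choose (a + d) = b.choose a * (b - a).choose d := by
  rw [mul_comm, Nat.choose_mul (Nat.le_add_right a d), Nat.add_sub_cancel_left]

theorem Finset.sum_piAntidiag_prod_choose {ι : Type*} [DecidableEq ι] (s : Finset ι)
    (c : ι → ℕ) (r : ℕ) :
    ∑ δ ∈ piAntidiag s r, ∏ i ∈ s, (c i).choose (δ i) = (∑ i ∈ s, c i).choose r := by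
  induction s using Finset.cons_induction generalizing r with
  | empty => rcases r with _ | r <;> simp
  | cons i s hi ih =>
    rw [piAntidiag_cons hi, sum_disjiUnion, sum_cons, Nat.add_choose_eq]
    refine sum_congr rfl fun p _ => ?_
    rw [sum_map, ← ih, mul_sum]
    refine sum_congr rfl fun δ hδ => ?_
    have hδi : δ i = 0 := by
      by_contra h
      exact hi ((mem_piAntidiag.mp hδ).2 i h)
    rw [prod_cons]
    congr 1
    · simp [hδi]
    · refine prod_congr rfl fun j hj => ?_
      simp [show j ≠ i by rintro rfl; exact hi hj]

theorem Finset.sum_piAntidiag_univ_eq_sum_add {ι R : Type*} [Fintype ι] [DecidableEq ι]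
    [AddCommMonoid R] (a : ι → ℕ) {j : ℕ} (hj : ∑ i, a i ≤ j) (G : (ι → ℕ) → R)
    (hG : ∀ s, ¬ a ≤ s → G s = 0) :
    ∑ s ∈ piAntidiag univ j, G s = ∑ δ ∈ piAntidiag univ (j - ∑ i, a i), G (a + δ) := by
  rw [← sum_image fun _ _ _ _ h => add_left_cancel h]
  symm
  refine sum_subset (fun s hs => ?_) fun s hs hs' => hG s fun has => hs' ?_
  · obtain ⟨δ, hδ, rfl⟩ := mem_image.mp hs
    simp only [mem_piAntidiag, mem_univ, implies_true, and_true] at hδ ⊢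
    simp only [Pi.add_apply, sum_add_distrib, hδ]
    omega
  · refine mem_image.mpr ⟨s - a, ?_, add_tsub_cancel_of_le has⟩
    simp only [mem_piAntidiag, mem_univ, implies_true, and_true] at hs ⊢
    simp only [Pi.sub_apply]
    rw [sum_tsub_distrib _ fun i _ => has i, hs]

theorem Nat.choose_eq_alternating_sum (x y γ : ℕ) :
    (y.choose γ : ℤ) =
      ∑ t ∈ range (γ + 1), (-1) ^ t * ((x + y - t).choose (γ - t) : ℤ) * (x.choose t : ℤ) := by
  induction x generalizing y γ with
  | zero => simp [sum_range_succ']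
  | succ x ih =>
    cases γ with
    | zero => simp
    | succ γ =>
      have hy := ih (y + 1) (γ + 1)
      have hγ := ih y γ
      rw [sum_range_succ'] at hy ⊢
      simp only [Nat.add_sub_add_right, Nat.choose_succ_succ, Nat.cast_add, pow_succ,
        Nat.sub_zero, Nat.choose_zero_right, add_right_comm x 1 y, ← add_assoc, mul_add,
        add_mul, sum_add_distrib, mul_neg_one, neg_mul, sum_neg_distrib,
        Nat.succ_eq_add_one] at hy hγ ⊢
      linear_combination hy - hγ

section

variable {k : ℕ} {M : Fin k → ℕ}

namespace Pel

theorem val_le {n : ℕ} (β : Pel M n) (i : Fin k) : (β.1 i : ℕ) ≤ M i :=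
  Nat.lt_succ_iff.mp (β.1 i).isLt

def ofLE (τ : Fin k → ℕ) (h : ∀ i, τ i ≤ M i) : Pel M (∑ i, τ i) :=
  ⟨fun i => ⟨τ i, Nat.lt_succ_of_le (h i)⟩, rfl⟩

theorem sum_eq_sum_piAntidiag {R : Type*} [AddCommMonoid R] {j : ℕ} (F : (Fin k → ℕ) → R)
    (hF : ∀ s, (∃ i, M i < s i) → F s = 0) :
    ∑ γ : Pel M j, F (fun i => γ.1 i) = ∑ s ∈ piAntidiag univ j, F s := by
  have hinj : Function.Injective fun (γ : Pel M j) i => (γ.1 i : ℕ) := fun γ γ' h =>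
    Subtype.ext (funext fun i => Fin.ext (congrFun h i))
  rw [← sum_image fun γ _ γ' _ h => hinj h]
  refine sum_subset (fun s hs => ?_) fun s _ hs => hF s ?_
  · obtain ⟨γ, -, rfl⟩ := mem_image.mp hs
    simpa using γ.2
  · by_contra! hle
    exact hs (mem_image.mpr ⟨⟨fun i => ⟨s i, Nat.lt_succ_of_le (hle i)⟩, by
      simpa using (mem_piAntidiag.mp ‹_›).1⟩, mem_univ _, rfl⟩)

end Pel

theorem le_of_uEntry_ne_zero {m n : ℕ} {α : Pel M m} {β : Pel M n} (h : uEntry M α β ≠ 0)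
    (i : Fin k) : (α.1 i : ℕ) ≤ β.1 i := by
  by_contra! hlt
  exact h (prod_eq_zero (mem_univ i) (Nat.choose_eq_zero_of_lt hlt))

theorem sum_uEntry_mul_uEntry {m j n : ℕ} (hmj : m ≤ j) (α : Pel M m) (β : Pel M n) :
    ∑ γ : Pel M j, uEntry M α γ * uEntry M γ β = (n - m).choose (j - m) * uEntry M α β := by
  let a : Fin k → ℕ := fun i => α.1 i
  let b : Fin k → ℕ := fun i => β.1 i
  calc ∑ γ : Pel M j, uEntry M α γ * uEntry M γ β
      = ∑ s ∈ piAntidiag univ j, ∏ i, (s i).choose (a i) * (b i).choose (s i) := by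
        simp only [uEntry, ← prod_mul_distrib]
        refine Pel.sum_eq_sum_piAntidiag (fun s => ∏ i, (s i).choose (a i) * (b i).choose (s i))
          fun s ⟨i, hi⟩ => prod_eq_zero (mem_univ i) ?_
        rw [Nat.choose_eq_zero_of_lt ((Pel.val_le β i).trans_lt hi), mul_zero]
    _ = ∑ δ ∈ piAntidiag univ (j - m),
          ∏ i, (a i + δ i).choose (a i) * (b i).choose (a i + δ i) := by
        rw [← α.2]
        refine sum_piAntidiag_univ_eq_sum_add a (α.2 ▸ hmj) _ fun s hs => ?_
        obtain ⟨i, hi⟩ : ∃ i, s i < a i := by simpa [Pi.le_def] using hs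
        exact prod_eq_zero (mem_univ i) (by rw [Nat.choose_eq_zero_of_lt hi, zero_mul])
    _ = ∑ δ ∈ piAntidiag univ (j - m), uEntry M α β * ∏ i, (b i - a i).choose (δ i) := by
        simp only [Nat.add_choose_left_mul_choose, prod_mul_distrib]
        rfl
    _ = (n - m).choose (j - m) * uEntry M α β := by
        rw [← mul_sum, sum_piAntidiag_prod_choose, mul_comm]
        rcases eq_or_ne (uEntry M α β) 0 with h | h
        · rw [h, mul_zero, mul_zero]
        · rw [sum_tsub_distrib _ fun i _ => le_of_uEntry_ne_zero h i, α.2, β.2]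

def uMat (M : Fin k → ℕ) (m n : ℕ) : Matrix (Pel M n) (Pel M m) ℤ :=
  fun β α => uEntry M α β

theorem uMat_mul_uMat {m j n : ℕ} (hmj : m ≤ j) :
    uMat M j n * uMat M m j = ((n - m).choose (j - m) : ℤ) • uMat M m n := by
  ext β α
  simp only [Matrix.mul_apply, Matrix.smul_apply, uMat, smul_eq_mul, mul_comm (uEntry M _ β : ℤ)]
  exact_mod_cast sum_uEntry_mul_uEntry hmj α β

open Matrix in
theorem uMat_mulVec_bFam (A : (m : ℕ) → Finset (Pel M m)) {j n n' : ℕ} (hjn : j ≤ n)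
    (x : (m : Fin (j + 1)) × {f : Pel M m // f ∈ A m}) :
    uMat M j n' *ᵥ bFam M A j j x =
      ((n' - x.1).choose (j - x.1) : ℤ) • bFam M A n n' ⟨Fin.castLE (by omega) x.1, x.2⟩ := by
  change uMat M j n' *ᵥ (uMat M x.1 j).col x.2.1 = _ • (uMat M x.1 n').col x.2.1
  rw [← Matrix.mulVec_single_one, ← Matrix.mulVec_single_one,
    Matrix.mulVec_mulVec, uMat_mul_uMat (Fin.is_le x.1), Matrix.smul_mulVec]

theorem prod_choose_sub_eq_ite {n : ℕ} (β β₀ : Pel M n) :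
    ∏ i, (M i - β.1 i).choose (M i - β₀.1 i) = if β = β₀ then 1 else 0 := by
  split_ifs with h
  · simp [h]
  obtain ⟨i, hi⟩ : ∃ i, (β₀.1 i : ℕ) < β.1 i := by
    by_contra! hle
    refine h (Subtype.ext (funext fun i => Fin.ext ?_))
    exact ((sum_eq_sum_iff_of_le fun i _ => hle i).mp (β.2.trans β₀.2.symm) i (mem_univ i))
  exact prod_eq_zero (mem_univ i) (Nat.choose_eq_zero_of_lt (by have := Pel.val_le β i; omega))

theorem single_eq_sum_smul_binomial {n : ℕ} (β₀ : Pel M n) :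
    Pi.single β₀ (1 : ℤ) =
      ∑ τ ∈ Fintype.piFinset fun i => range (M i - β₀.1 i + 1),
        (∏ i, (-1) ^ τ i * ((M i - τ i).choose (M i - β₀.1 i - τ i) : ℤ)) •
          fun β : Pel M n => ∏ i, ((β.1 i : ℕ).choose (τ i) : ℤ) := by
  funext β
  have hind := congrArg (Nat.cast (R := ℤ)) (prod_choose_sub_eq_ite β β₀)
  push_cast at hind
  rw [Pi.single_apply, ← hind]
  simp only [Finset.sum_apply, Pi.smul_apply, smul_eq_mul, ← prod_mul_distrib]
  rw [← prod_univ_sum (fun i => range (M i - β₀.1 i + 1))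
    fun i t => (-1) ^ t * ((M i - t).choose (M i - β₀.1 i - t) : ℤ) * ((β.1 i : ℕ).choose t : ℤ)]
  refine prod_congr rfl fun i _ => ?_
  rw [Nat.choose_eq_alternating_sum (β.1 i) _ _, Nat.add_sub_cancel' (Pel.val_le β i)]

theorem span_uMat_col_eq_top (n : ℕ) :
    Submodule.span ℤ {v | ∃ j ≤ totalM M - n, ∃ α : Pel M j, v = (uMat M j n).col α} = ⊤ := by
  rw [eq_top_iff, ← (Pi.basisFun ℤ (Pel M n)).span_eq, Submodule.span_le]
  rintro _ ⟨β₀, rfl⟩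
  rw [Pi.basisFun_apply, single_eq_sum_smul_binomial]
  refine Submodule.sum_mem _ fun τ hτ => Submodule.smul_mem _ _ (Submodule.subset_span ?_)
  have hτ' : ∀ i, τ i ≤ M i - β₀.1 i := by
    simpa [Fintype.mem_piFinset, Nat.lt_succ_iff] using hτ
  refine ⟨∑ i, τ i, ?_, Pel.ofLE τ fun i => (hτ' i).trans (Nat.sub_le _ _), ?_⟩
  · calc ∑ i, τ i ≤ ∑ i, (M i - β₀.1 i) := sum_le_sum fun i _ => hτ' i
      _ = totalM M - n := by rw [sum_tsub_distrib _ fun i _ => Pel.val_le β₀ i, β₀.2]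
  · ext β
    simp [uMat, uEntry, Pel.ofLE]

theorem span_bFam_eq_top (A : (m : ℕ) → Finset (Pel M m))
    (hspan : ∀ n, 2 * n ≤ totalM M → Submodule.span ℤ (Set.range (bFam M A n n)) = ⊤)
    {n' : ℕ} (hn' : totalM M ≤ 2 * n') :
    Submodule.span ℤ (Set.range (bFam M A (totalM M - n') n')) = ⊤ := by
  rw [eq_top_iff, ← span_uMat_col_eq_top n', Submodule.span_le]
  rintro _ ⟨j, hj, α, rfl⟩
  have hα : Pi.single α (1 : ℤ) ∈ Submodule.span ℤ (Set.range (bFam M A j j)) := by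
    rw [hspan j (by omega)]
    trivial
  have hmap := Submodule.mem_map_of_mem (f := (uMat M j n').mulVecLin) hα
  rw [Submodule.map_span, Matrix.mulVecLin_apply, Matrix.mulVec_single_one] at hmap
  refine Submodule.span_le.mpr ?_ hmap
  rintro _ ⟨_, ⟨x, rfl⟩, rfl⟩
  rw [Matrix.mulVecLin_apply, uMat_mulVec_bFam A hj]
  exact Submodule.smul_mem _ _ (Submodule.subset_span ⟨_, rfl⟩)

theorem cmpl_injective {n : ℕ} : Function.Injective (cmpl M (n := n)) := by
  intro α α' h
  refine Subtype.ext (funext fun i => Fin.ext ?_)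
  have hi := congrArg (fun γ : Pel M _ => (γ.1 i : ℕ)) h
  simp only [cmpl] at hi
  have := Pel.val_le α i
  have := Pel.val_le α' i
  omega

theorem card_pel_totalM_sub {n : ℕ} (h : n ≤ totalM M) :
    Fintype.card (Pel M (totalM M - n)) = Fintype.card (Pel M n) := by
  refine le_antisymm ?_ (Fintype.card_le_of_injective _ cmpl_injective)
  have := Fintype.card_le_of_injective _ (cmpl_injective (M := M) (n := totalM M - n))
  rwa [Nat.sub_sub_self h] at this

theorem sum_card_eq_card_pel (A : (m : ℕ) → Finset (Pel M m))
    (hcard : ∀ m, 2 * m ≤ totalM M → (A m).card + prevP M m = Fintype.card (Pel M m))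
    {n : ℕ} (hn : 2 * n ≤ totalM M) :
    ∑ m ∈ range (n + 1), (A m).card = Fintype.card (Pel M n) := by
  induction n with
  | zero => simpa [prevP] using hcard 0 (by omega)
  | succ n ih => rw [sum_range_succ, ih (by omega), add_comm]; exact hcard (n + 1) hn

theorem card_bFam_index (A : (m : ℕ) → Finset (Pel M m)) (n : ℕ) :
    Fintype.card ((m : Fin (n + 1)) × {f : Pel M m // f ∈ A m}) =
      ∑ m ∈ range (n + 1), (A m).card := by
  simp [Fintype.card_sigma, ← Fin.sum_univ_eq_sum_range (fun m => (A m).card)]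

end

theorem integral_basis_upper_general {k : ℕ} (M : Fin k → ℕ)
    (A : (m : ℕ) → Finset (Pel M m))
    (hcard : ∀ m : ℕ, 2 * m ≤ totalM M →
      (A m).card + prevP M m = Fintype.card (Pel M m))
    (hbasis : ∀ n : ℕ, 2 * n ≤ totalM M →
      LinearIndependent ℤ (bFam M A n n) ∧
      Submodule.span ℤ (Set.range (bFam M A n n)) = ⊤) :
    ∀ n' : ℕ, totalM M ≤ 2 * n' → n' ≤ totalM M →
      LinearIndependent ℤ (bFam M A (totalM M - n') n') ∧
      Submodule.span ℤ (Set.range (bFam M A (totalM M - n') n')) = ⊤ := by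
  intro n' hn' hle
  have hspan := span_bFam_eq_top A (fun n hn => (hbasis n hn).2) hn'
  refine ⟨linearIndependent_of_top_le_span_of_card_eq_finrank hspan.ge ?_, hspan⟩
  rw [Module.finrank_fintype_fun_eq_card, card_bFam_index,
    sum_card_eq_card_pel A hcard (by omega), card_pel_totalM_sub hle]

/-- Suppose `A m ⊆ P_m^M` (for `0 ≤ m ≤ |M|/2`) satisfy `#(A m) = p_m - p_{m-1}` and,
for every `n` with `2n ≤ |M|`, the family `⋃_{m ≤ n} (U_M^(n-m)/(n-m)!) '' (A m)` is a
`ℤ`-basis of `ℤP_n^M`.  Then for every `n'` with `|M|/2 ≤ n' ≤ |M|`, the family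
`B_{n'} = ⋃_{m ≤ |M| - n'} (U_M^(n'-m)/(n'-m)!) '' (A m)` is a `ℤ`-basis of
`ℤP_{n'}^M`. -/
theorem integral_basis_upper {k : ℕ} (hk : 1 ≤ k) (M : Fin k → ℕ)
    (A : (m : ℕ) → Finset (Pel M m))
    (hcard : ∀ m : ℕ, 2 * m ≤ totalM M →
      (A m).card + prevP M m = Fintype.card (Pel M m))
    (hbasis : ∀ n : ℕ, 2 * n ≤ totalM M →
      LinearIndependent ℤ (bFam M A n n) ∧
      Submodule.span ℤ (Set.range (bFam M A n n)) = ⊤) :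
    ∀ n' : ℕ, totalM M ≤ 2 * n' → n' ≤ totalM M →
      LinearIndependent ℤ (bFam M A (totalM M - n') n') ∧
      Submodule.span ℤ (Set.range (bFam M A (totalM M - n') n')) = ⊤ :=
  integral_basis_upper_general M A hcard hbasis
end
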